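/- arXiv:1510.00452 — 9 statements merged into one kernel-verified Lean document; each statement's English description precedes it below -/
import Mathlib

section
/- The potential well is continuous and 1-Lipschitz: for all m, m' ∈ ℝ, |Ψ(m) − Ψ(m')| ≤ |m − m'| (first part of Lemma 2.1). -/
open scoped BigOperators

noncomputable def Psi (lp lm Γinv : ℝ → ℝ) (m : ℝ) : ℝ :=
  if m ≤ lm (-1) - lp (-1) then -m + 2 * lm (-1)
  else if m < lm 1 - lp 1 then lp (Γinv m) + lm (Γinv m)
  else m + 2 * lp 1

theorem stmt_0
    (lp lm lp' lm' lp'' lm'' Γinv : ℝ → ℝ)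
    (hlpc : ContinuousOn lp (Set.Icc (-1) 1))
    (hlmc : ContinuousOn lm (Set.Icc (-1) 1))
    (hlpd : ∀ x ∈ Set.Ioo (-1:ℝ) 1, HasDerivAt lp (lp' x) x)
    (hlmd : ∀ x ∈ Set.Ioo (-1:ℝ) 1, HasDerivAt lm (lm' x) x)
    (hlpd2 : ∀ x ∈ Set.Ioo (-1:ℝ) 1, HasDerivAt lp' (lp'' x) x)
    (hlmd2 : ∀ x ∈ Set.Ioo (-1:ℝ) 1, HasDerivAt lm' (lm'' x) x)
    (hlpm : AntitoneOn lp (Set.Icc (-1) 1))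
    (hlmm : MonotoneOn lm (Set.Icc (-1) 1))
    (hslope : ∀ x ∈ Set.Ioo (-1:ℝ) 1, 0 < lm' x - lp' x)
    (hGinvMem : ∀ m ∈ Set.Icc (lm (-1) - lp (-1)) (lm 1 - lp 1), Γinv m ∈ Set.Icc (-1:ℝ) 1)
    (hGinvRight : ∀ m ∈ Set.Icc (lm (-1) - lp (-1)) (lm 1 - lp 1), lm (Γinv m) - lp (Γinv m) = m)
    (hGinvLeft : ∀ g ∈ Set.Icc (-1:ℝ) 1, Γinv (lm g - lp g) = g)
    :
    Continuous (Psi lp lm Γinv) ∧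
    ∀ m m' : ℝ, |Psi lp lm Γinv m - Psi lp lm Γinv m'| ≤ |m - m'| := by
  set A := lm (-1) - lp (-1) with hA
  set B := lm 1 - lp 1 with hB
  have hm1 : (-1:ℝ) ∈ Set.Icc (-1:ℝ) 1 := by norm_num
  have h1 : (1:ℝ) ∈ Set.Icc (-1:ℝ) 1 := by norm_num
  have hlmAB : lm (-1) ≤ lm 1 := hlmm hm1 h1 (by norm_num)
  have hlpAB : lp 1 ≤ lp (-1) := hlpm hm1 h1 (by norm_num)
  have hAB : A ≤ B := by rw [hA, hB]; linarith
  have hGA : Γinv A = -1 := hGinvLeft (-1) hm1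
  have hGB : Γinv B = 1 := hGinvLeft 1 h1
  -- left and right region formulas
  have hPL : ∀ x, x ≤ A → Psi lp lm Γinv x = -x + 2 * lm (-1) := by
    intro x hx
    simp only [Psi, ← hA, if_pos hx]
  have hPR : ∀ x, B ≤ x → Psi lp lm Γinv x = x + 2 * lp 1 := by
    intro x hx
    by_cases h : x ≤ A
    · -- degenerate: A = B = x
      have hxA : x = A := le_antisymm h (le_trans hAB hx)
      have hABeq : A = B := le_antisymm hAB (by linarith [hx, h])
      have hlm : lm (-1) = lm 1 := by rw [hA, hB] at hABeq; linarith
      have hlp : lp (-1) = lp 1 := by rw [hA, hB] at hABeq; linarith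
      rw [hPL x h, hxA, hA, hlm, hlp]; ring
    · have h2 : ¬ x < B := not_lt.mpr hx
      simp only [Psi, ← hA, ← hB, if_neg h, if_neg h2]
  -- middle region formula
  have hPM : ∀ x ∈ Set.Icc A B, Psi lp lm Γinv x = lp (Γinv x) + lm (Γinv x) := by
    rintro x ⟨hx1, hx2⟩
    by_cases h : x ≤ A
    · have hxA : x = A := le_antisymm h hx1
      rw [hxA, hPL A le_rfl, hGA, hA]; ring
    · by_cases h2 : x < B
      · simp only [Psi, ← hA, ← hB, if_neg h, if_pos h2]
      · have hxB : x = B := le_antisymm hx2 (not_lt.mp h2)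
        rw [hxB, hPR B le_rfl, hGB, hB]; ring
  -- key estimate on the middle region
  have hkey : ∀ m ∈ Set.Icc A B, ∀ m' ∈ Set.Icc A B, m ≤ m' →
      |Psi lp lm Γinv m' - Psi lp lm Γinv m| ≤ m' - m := by
    intro m hm m' hm' hmm'
    have hgm := hGinvMem m hm
    have hgm' := hGinvMem m' hm'
    have em := hGinvRight m hm
    have em' := hGinvRight m' hm'
    have hmono : Γinv m ≤ Γinv m' := by
      by_contra hc
      push_neg at hc
      have h1' : lm (Γinv m') ≤ lm (Γinv m) := hlmm hgm' hgm hc.le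
      have h2' : lp (Γinv m) ≤ lp (Γinv m') := hlpm hgm' hgm hc.le
      have hle : m' ≤ m := by linarith
      have heq : m = m' := le_antisymm hmm' hle
      rw [heq] at hc
      exact lt_irrefl _ hc
    have ha : lm (Γinv m) ≤ lm (Γinv m') := hlmm hgm hgm' hmono
    have hb : lp (Γinv m') ≤ lp (Γinv m) := hlpm hgm hgm' hmono
    rw [hPM m hm, hPM m' hm', abs_le]
    constructor <;> linarith
  -- main Lipschitz estimate for ordered arguments
  have main : ∀ m m', m ≤ m' → |Psi lp lm Γinv m' - Psi lp lm Γinv m| ≤ m' - m := by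
    intro m m' hmm'
    by_cases ha1 : m' ≤ A
    · rw [hPL m (hmm'.trans ha1), hPL m' ha1]
      have : -m' + 2 * lm (-1) - (-m + 2 * lm (-1)) = -(m' - m) := by ring
      rw [this, abs_neg, abs_of_nonneg (by linarith)]
    · push_neg at ha1
      by_cases hb1 : B ≤ m
      · rw [hPR m hb1, hPR m' (hb1.trans hmm')]
        have : m' + 2 * lp 1 - (m + 2 * lp 1) = m' - m := by ring
        rw [this, abs_of_nonneg (by linarith)]
      · push_neg at hb1
        set p := max m A with hp
        set q := min m' B with hq
        have hpmem : p ∈ Set.Icc A B := ⟨le_max_right _ _, max_le hb1.le hAB⟩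
        have hqmem : q ∈ Set.Icc A B := ⟨le_min ha1.le hAB, min_le_right _ _⟩
        have hpq : p ≤ q := max_le (le_min hmm' hb1.le) hqmem.1
        have h3 : |Psi lp lm Γinv q - Psi lp lm Γinv p| ≤ q - p := hkey p hpmem q hqmem hpq
        have h4 : |Psi lp lm Γinv p - Psi lp lm Γinv m| ≤ p - m := by
          by_cases hm2 : m ≤ A
          · have hpA : p = A := max_eq_right hm2
            rw [hpA, hPL A le_rfl, hPL m hm2]
            have : -A + 2 * lm (-1) - (-m + 2 * lm (-1)) = -(A - m) := by ring
            rw [this, abs_neg, abs_of_nonneg (by linarith)]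
          · push_neg at hm2
            have hpm : p = m := max_eq_left hm2.le
            rw [hpm]; simp
          -- done
        have h5 : |Psi lp lm Γinv m' - Psi lp lm Γinv q| ≤ m' - q := by
          by_cases hm2 : B ≤ m'
          · have hqB : q = B := min_eq_right hm2
            rw [hqB, hPR B le_rfl, hPR m' hm2]
            have : m' + 2 * lp 1 - (B + 2 * lp 1) = m' - B := by ring
            rw [this, abs_of_nonneg (by linarith)]
          · push_neg at hm2
            have hqm : q = m' := min_eq_left hm2.le
            rw [hqm]; simp
        calc |Psi lp lm Γinv m' - Psi lp lm Γinv m|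
            ≤ |Psi lp lm Γinv m' - Psi lp lm Γinv q| + |Psi lp lm Γinv q - Psi lp lm Γinv m| := by
              exact abs_sub_le _ _ _
          _ ≤ |Psi lp lm Γinv m' - Psi lp lm Γinv q| +
              (|Psi lp lm Γinv q - Psi lp lm Γinv p| + |Psi lp lm Γinv p - Psi lp lm Γinv m|) := by
              linarith [abs_sub_le (Psi lp lm Γinv q) (Psi lp lm Γinv p) (Psi lp lm Γinv m)]
          _ ≤ (m' - q) + ((q - p) + (p - m)) := by linarith
          _ = m' - m := by ring
  have lip : ∀ m m' : ℝ, |Psi lp lm Γinv m - Psi lp lm Γinv m'| ≤ |m - m'| := by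
    intro m m'
    rcases le_total m m' with h | h
    · rw [abs_sub_comm, abs_sub_comm m m', abs_of_nonneg (by linarith : (0:ℝ) ≤ m' - m)]
      exact main m m' h
    · rw [abs_of_nonneg (by linarith : (0:ℝ) ≤ m - m')]
      exact main m' m h
  refine ⟨?_, lip⟩
  have : LipschitzWith 1 (Psi lp lm Γinv) := by
    apply LipschitzWith.of_dist_le_mul
    intro x y
    simp only [Real.dist_eq, NNReal.coe_one, one_mul]
    exact lip x y
  exact this.continuous
end

section
/- If the partial losses ℓ₊ and ℓ₋ are convex on [−1,1], then the potential well Ψ is convex on ℝ (condition (A) of Lemma 2.1). -/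
open scoped BigOperators

/-!
For `t ∈ [-1, 1]` and `c ≤ (1 - t) ℓ₋ + (1 + t) ℓ₊` on `[-1, 1]`, the line `m ↦ t m + c` lies
below `Ψ`: in the middle range write `m = Γ g`, and then `t m + c ≤ ℓ₊ g + ℓ₋ g`. Every point of
`Ψ` lies on such a line. On the two affine pieces take `t = ∓1`, which works by monotonicity of the
partial losses. At `m = Γ g₀` with `g₀` interior, take `t = (ℓ₋' + ℓ₊') / (ℓ₋' - ℓ₊')` at `g₀`: it
makes `g₀` a critical point, hence a minimiser, of the convex function `(1 - t) ℓ₋ + (1 + t) ℓ₊`.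
So `Ψ` has a supporting line at every point, and is convex.
-/

open Set Filter Topology

lemma convexOn_of_exists_supporting_line {𝕜 : Type*} [Field 𝕜] [LinearOrder 𝕜]
    [IsStrictOrderedRing 𝕜] {s : Set 𝕜} {f : 𝕜 → 𝕜} (hs : Convex 𝕜 s)
    (h : ∀ x ∈ s, ∃ c, ∀ y ∈ s, f x + c * (y - x) ≤ f y) : ConvexOn 𝕜 s f := by
  refine ⟨hs, fun x hx y hy a b ha hb hab => ?_⟩
  obtain ⟨c, hc⟩ := h _ (hs hx hy ha hb hab)
  simp only [smul_eq_mul] at hc ⊢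
  set z := a * x + b * y with hz
  calc f z = a * (f z + c * (x - z)) + b * (f z + c * (y - z)) := by
        linear_combination (c * z - f z) * hab + c * hz
    _ ≤ a * f x + b * f y := by gcongr <;> exact hc _ ‹_›

lemma ConvexOn.add_mul_sub_le_of_hasDerivAt {S : Set ℝ} {f : ℝ → ℝ} {x y f' : ℝ}
    (hf : ConvexOn ℝ S f) (hx : x ∈ S) (hy : y ∈ S) (hd : HasDerivAt f f' x) :
    f x + f' * (y - x) ≤ f y := by
  rcases lt_trichotomy x y with hxy | rfl | hyx
  · have := hf.le_slope_of_hasDerivAt hx hy hxy hd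
    rw [slope_def_field, le_div_iff₀ (sub_pos.2 hxy)] at this
    linarith
  · simp
  · have := hf.slope_le_of_hasDerivAt hy hx hyx hd
    rw [slope_def_field, div_le_iff₀ (sub_pos.2 hyx)] at this
    linarith

lemma accPt_of_mem_nhds {X : Type*} [TopologicalSpace X] [PerfectSpace X] {x : X} {s : Set X}
    (hs : s ∈ 𝓝 x) : AccPt x (𝓟 s) := by
  simpa using (PerfectSpace.univ_preperfect x (mem_univ x)).nhds_inter hs

lemma exists_isMinOn_weighted_add {lp lm : ℝ → ℝ} {S : Set ℝ} {x a b : ℝ} (hS : S ∈ 𝓝 x)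
    (ha : HasDerivAt lp a x) (hb : HasDerivAt lm b x) (hlpm : AntitoneOn lp S)
    (hlmm : MonotoneOn lm S) (hab : 0 < b - a) (hlpcvx : ConvexOn ℝ S lp)
    (hlmcvx : ConvexOn ℝ S lm) :
    ∃ t ∈ Icc (-1 : ℝ) 1, IsMinOn (fun g => (1 - t) * lm g + (1 + t) * lp g) S x := by
  have ha0 : a ≤ 0 := ha.hasDerivWithinAt.nonpos_of_antitoneOn (accPt_of_mem_nhds hS) hlpm
  have hb0 : 0 ≤ b := hb.hasDerivWithinAt.nonneg_of_monotoneOn (accPt_of_mem_nhds hS) hlmm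
  set t := (b + a) / (b - a)
  have ht : t ∈ Icc (-1 : ℝ) 1 :=
    ⟨by rw [le_div_iff₀ hab]; linarith, by rw [div_le_one hab]; linarith⟩
  have hconv : ConvexOn ℝ S (fun g => (1 - t) * lm g + (1 + t) * lp g) :=
    (hlmcvx.smul (by linarith [ht.2])).add (hlpcvx.smul (by linarith [ht.1]))
  have hcrit : HasDerivAt (fun g => (1 - t) * lm g + (1 + t) * lp g) 0 x := by
    have hzero : (1 - t) * b + (1 + t) * a = 0 := by
      simp only [t]; field_simp; ring
    simpa only [hzero] using (hb.const_mul (1 - t)).fun_add (ha.const_mul (1 + t))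
  refine ⟨t, ht, fun g hg => ?_⟩
  simpa using hconv.add_mul_sub_le_of_hasDerivAt (mem_of_mem_nhds hS) hg hcrit

section PotentialWell

variable {lp lm Γinv : ℝ → ℝ}

lemma affine_le_Psi
    (hGinvMem : ∀ m ∈ Icc (lm (-1) - lp (-1)) (lm 1 - lp 1), Γinv m ∈ Icc (-1:ℝ) 1)
    (hGinvRight : ∀ m ∈ Icc (lm (-1) - lp (-1)) (lm 1 - lp 1), lm (Γinv m) - lp (Γinv m) = m)
    {t c : ℝ} (ht : t ∈ Icc (-1 : ℝ) 1)
    (hc : ∀ g ∈ Icc (-1 : ℝ) 1, c ≤ (1 - t) * lm g + (1 + t) * lp g) (m : ℝ) :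
    t * m + c ≤ Psi lp lm Γinv m := by
  have hleft := hc (-1) (by norm_num)
  have hright := hc 1 (by norm_num)
  unfold Psi
  split_ifs with hle hlt
  · linarith [mul_le_mul_of_nonneg_left hle (neg_le_iff_add_nonneg'.1 ht.1)]
  · have hm : m ∈ Icc (lm (-1) - lp (-1)) (lm 1 - lp 1) := ⟨(not_le.1 hle).le, hlt.le⟩
    have hcg := hc _ (hGinvMem m hm)
    calc t * m + c
        ≤ t * (lm (Γinv m) - lp (Γinv m)) + ((1 - t) * lm (Γinv m) + (1 + t) * lp (Γinv m)) := by
          rw [hGinvRight m hm]; linarith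
      _ = lp (Γinv m) + lm (Γinv m) := by ring
  · linarith [mul_le_mul_of_nonneg_left (not_lt.1 hlt) (sub_nonneg.2 ht.2)]

lemma exists_affine_eq_Psi {lp' lm' : ℝ → ℝ}
    (hlpd : ∀ x ∈ Ioo (-1:ℝ) 1, HasDerivAt lp (lp' x) x)
    (hlmd : ∀ x ∈ Ioo (-1:ℝ) 1, HasDerivAt lm (lm' x) x)
    (hlpm : AntitoneOn lp (Icc (-1) 1)) (hlmm : MonotoneOn lm (Icc (-1) 1))
    (hslope : ∀ x ∈ Ioo (-1:ℝ) 1, 0 < lm' x - lp' x)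
    (hGinvMem : ∀ m ∈ Icc (lm (-1) - lp (-1)) (lm 1 - lp 1), Γinv m ∈ Icc (-1:ℝ) 1)
    (hGinvRight : ∀ m ∈ Icc (lm (-1) - lp (-1)) (lm 1 - lp 1), lm (Γinv m) - lp (Γinv m) = m)
    (hlpcvx : ConvexOn ℝ (Icc (-1:ℝ) 1) lp) (hlmcvx : ConvexOn ℝ (Icc (-1:ℝ) 1) lm) (m : ℝ) :
    ∃ t ∈ Icc (-1 : ℝ) 1, ∃ c, (∀ g ∈ Icc (-1 : ℝ) 1, c ≤ (1 - t) * lm g + (1 + t) * lp g) ∧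
      Psi lp lm Γinv m = t * m + c := by
  have hneg : (-1 : ℝ) ∈ Icc (-1 : ℝ) 1 := left_mem_Icc.2 (by norm_num)
  have hpos : (1 : ℝ) ∈ Icc (-1 : ℝ) 1 := right_mem_Icc.2 (by norm_num)
  by_cases hle : m ≤ lm (-1) - lp (-1)
  · refine ⟨-1, hneg, 2 * lm (-1), fun g hg => ?_, ?_⟩
    · linarith [hlmm hneg hg hg.1]
    · rw [Psi, if_pos hle]; ring
  by_cases hlt : m < lm 1 - lp 1
  · have hm : m ∈ Icc (lm (-1) - lp (-1)) (lm 1 - lp 1) := ⟨(not_le.1 hle).le, hlt.le⟩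
    have hΓ := hGinvRight m hm
    set g₀ := Γinv m
    have hg₀ : g₀ ∈ Ioo (-1 : ℝ) 1 := by
      obtain ⟨h1, h2⟩ : g₀ ∈ Icc (-1 : ℝ) 1 := hGinvMem m hm
      refine ⟨h1.lt_of_ne fun h => hle ?_, h2.lt_of_ne fun h => ?_⟩
      · rw [← hΓ, ← h]
      · rw [← hΓ, h] at hlt; exact lt_irrefl _ hlt
    obtain ⟨t, ht, hmin⟩ := exists_isMinOn_weighted_add (Icc_mem_nhds hg₀.1 hg₀.2)
      (hlpd g₀ hg₀) (hlmd g₀ hg₀) hlpm hlmm (hslope g₀ hg₀) hlpcvx hlmcvx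
    refine ⟨t, ht, (1 - t) * lm g₀ + (1 + t) * lp g₀, fun g hg => isMinOn_iff.1 hmin g hg, ?_⟩
    rw [Psi, if_neg hle, if_pos hlt]; linear_combination t * hΓ
  · refine ⟨1, hpos, 2 * lp 1, fun g hg => ?_, ?_⟩
    · linarith [hlpm hg hpos hg.2]
    · rw [Psi, if_neg hle, if_neg hlt]; ring

end PotentialWell

theorem stmt_1_general
    (lp lm lp' lm' Γinv : ℝ → ℝ)
    (hlpd : ∀ x ∈ Set.Ioo (-1:ℝ) 1, HasDerivAt lp (lp' x) x)
    (hlmd : ∀ x ∈ Set.Ioo (-1:ℝ) 1, HasDerivAt lm (lm' x) x)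
    (hlpm : AntitoneOn lp (Set.Icc (-1) 1))
    (hlmm : MonotoneOn lm (Set.Icc (-1) 1))
    (hslope : ∀ x ∈ Set.Ioo (-1:ℝ) 1, 0 < lm' x - lp' x)
    (hGinvMem : ∀ m ∈ Set.Icc (lm (-1) - lp (-1)) (lm 1 - lp 1), Γinv m ∈ Set.Icc (-1:ℝ) 1)
    (hGinvRight : ∀ m ∈ Set.Icc (lm (-1) - lp (-1)) (lm 1 - lp 1), lm (Γinv m) - lp (Γinv m) = m)
    (hlpcvx : ConvexOn ℝ (Set.Icc (-1:ℝ) 1) lp)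
    (hlmcvx : ConvexOn ℝ (Set.Icc (-1:ℝ) 1) lm) :
    ConvexOn ℝ Set.univ (Psi lp lm Γinv) := by
  refine convexOn_of_exists_supporting_line convex_univ fun m _ => ?_
  obtain ⟨t, ht, c, hc, hΨ⟩ := exists_affine_eq_Psi hlpd hlmd hlpm hlmm hslope hGinvMem
    hGinvRight hlpcvx hlmcvx m
  refine ⟨t, fun m' _ => ?_⟩
  calc Psi lp lm Γinv m + t * (m' - m) = t * m' + c := by rw [hΨ]; ring
    _ ≤ Psi lp lm Γinv m' := affine_le_Psi hGinvMem hGinvRight ht hc m'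

theorem stmt_1
    (lp lm lp' lm' lp'' lm'' Γinv : ℝ → ℝ)
    (hlpc : ContinuousOn lp (Set.Icc (-1) 1))
    (hlmc : ContinuousOn lm (Set.Icc (-1) 1))
    (hlpd : ∀ x ∈ Set.Ioo (-1:ℝ) 1, HasDerivAt lp (lp' x) x)
    (hlmd : ∀ x ∈ Set.Ioo (-1:ℝ) 1, HasDerivAt lm (lm' x) x)
    (hlpd2 : ∀ x ∈ Set.Ioo (-1:ℝ) 1, HasDerivAt lp' (lp'' x) x)
    (hlmd2 : ∀ x ∈ Set.Ioo (-1:ℝ) 1, HasDerivAt lm' (lm'' x) x)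
    (hlpm : AntitoneOn lp (Set.Icc (-1) 1))
    (hlmm : MonotoneOn lm (Set.Icc (-1) 1))
    (hslope : ∀ x ∈ Set.Ioo (-1:ℝ) 1, 0 < lm' x - lp' x)
    (hGinvMem : ∀ m ∈ Set.Icc (lm (-1) - lp (-1)) (lm 1 - lp 1), Γinv m ∈ Set.Icc (-1:ℝ) 1)
    (hGinvRight : ∀ m ∈ Set.Icc (lm (-1) - lp (-1)) (lm 1 - lp 1), lm (Γinv m) - lp (Γinv m) = m)
    (hGinvLeft : ∀ g ∈ Set.Icc (-1:ℝ) 1, Γinv (lm g - lp g) = g)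
    (hlpcvx : ConvexOn ℝ (Set.Icc (-1:ℝ) 1) lp)
    (hlmcvx : ConvexOn ℝ (Set.Icc (-1:ℝ) 1) lm) :
    ConvexOn ℝ Set.univ (Psi lp lm Γinv) :=
  stmt_1_general lp lm lp' lm' Γinv hlpd hlmd hlpm hlmm hslope hGinvMem hGinvRight hlpcvx hlmcvx
end

section
/- If the loss ℓ is proper, i.e. for every z ∈ [−1,1] and every g ∈ [−1,1] one has ℓ(z,z) ≤ ℓ(z,g), then the potential well Ψ is convex on ℝ (condition (B) of Lemma 2.1). -/
open scoped BigOperators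

lemma convexOn_of_support (f : ℝ → ℝ)
    (h : ∀ m : ℝ, ∃ s : ℝ, ∀ m' : ℝ, f m + s * (m' - m) ≤ f m') :
    ConvexOn ℝ Set.univ f := by
  refine ⟨convex_univ, ?_⟩
  intro x _ y _ a b ha hb hab
  obtain rfl : b = 1 - a := by linarith
  obtain ⟨s, hs⟩ := h (a • x + (1 - a) • y)
  have hx := hs x
  have hy := hs y
  simp only [smul_eq_mul] at *
  nlinarith [mul_le_mul_of_nonneg_left hx ha, mul_le_mul_of_nonneg_left hy hb]

theorem stmt_2
    (lp lm lp' lm' lp'' lm'' Γinv : ℝ → ℝ)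
    (hlpc : ContinuousOn lp (Set.Icc (-1) 1))
    (hlmc : ContinuousOn lm (Set.Icc (-1) 1))
    (hlpd : ∀ x ∈ Set.Ioo (-1:ℝ) 1, HasDerivAt lp (lp' x) x)
    (hlmd : ∀ x ∈ Set.Ioo (-1:ℝ) 1, HasDerivAt lm (lm' x) x)
    (hlpd2 : ∀ x ∈ Set.Ioo (-1:ℝ) 1, HasDerivAt lp' (lp'' x) x)
    (hlmd2 : ∀ x ∈ Set.Ioo (-1:ℝ) 1, HasDerivAt lm' (lm'' x) x)
    (hlpm : AntitoneOn lp (Set.Icc (-1) 1))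
    (hlmm : MonotoneOn lm (Set.Icc (-1) 1))
    (hslope : ∀ x ∈ Set.Ioo (-1:ℝ) 1, 0 < lm' x - lp' x)
    (hGinvMem : ∀ m ∈ Set.Icc (lm (-1) - lp (-1)) (lm 1 - lp 1), Γinv m ∈ Set.Icc (-1:ℝ) 1)
    (hGinvRight : ∀ m ∈ Set.Icc (lm (-1) - lp (-1)) (lm 1 - lp 1), lm (Γinv m) - lp (Γinv m) = m)
    (hGinvLeft : ∀ g ∈ Set.Icc (-1:ℝ) 1, Γinv (lm g - lp g) = g)
    (hproper : ∀ z ∈ Set.Icc (-1:ℝ) 1, ∀ g ∈ Set.Icc (-1:ℝ) 1,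
      (1 + z) / 2 * lp z + (1 - z) / 2 * lm z ≤ (1 + z) / 2 * lp g + (1 - z) / 2 * lm g) :
    ConvexOn ℝ Set.univ (Psi lp lm Γinv) := by
  have hm1 : (-1:ℝ) ∈ Set.Icc (-1:ℝ) 1 := Set.mem_Icc.mpr ⟨le_refl _, by norm_num⟩
  have hp1 : (1:ℝ) ∈ Set.Icc (-1:ℝ) 1 := Set.mem_Icc.mpr ⟨by norm_num, le_refl _⟩
  have h1 : lp 1 ≤ lp (-1) := hlpm hm1 hp1 (by norm_num)
  have h2 : lm (-1) ≤ lm 1 := hlmm hm1 hp1 (by norm_num)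
  -- rearranged properness inequality
  have hP : ∀ z ∈ Set.Icc (-1:ℝ) 1, ∀ g ∈ Set.Icc (-1:ℝ) 1,
      lp z + lm z + z * ((lm g - lp g) - (lm z - lp z)) ≤ lp g + lm g := by
    intro z hz g hg
    have := hproper z hz g hg
    nlinarith [this]
  apply convexOn_of_support
  intro m
  by_cases hA : m ≤ lm (-1) - lp (-1)
  · refine ⟨-1, fun m' => ?_⟩
    simp only [Psi, if_pos hA]
    by_cases hA' : m' ≤ lm (-1) - lp (-1)
    · rw [if_pos hA']; linarith
    · rw [if_neg hA']
      push_neg at hA'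
      by_cases hB' : m' < lm 1 - lp 1
      · rw [if_pos hB']
        have hmem' : m' ∈ Set.Icc (lm (-1) - lp (-1)) (lm 1 - lp 1) :=
          Set.mem_Icc.mpr ⟨le_of_lt hA', le_of_lt hB'⟩
        have hg := hGinvMem m' hmem'
        have hgr := hGinvRight m' hmem'
        have : lm (-1) ≤ lm (Γinv m') := hlmm hm1 hg (Set.mem_Icc.mp hg).1
        linarith
      · rw [if_neg hB']
        push_neg at hB'
        linarith
  · push_neg at hA
    by_cases hB : m < lm 1 - lp 1
    · -- middle case
      have hmem : m ∈ Set.Icc (lm (-1) - lp (-1)) (lm 1 - lp 1) :=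
        Set.mem_Icc.mpr ⟨le_of_lt hA, le_of_lt hB⟩
      set z := Γinv m with hzdef
      have hz := hGinvMem m hmem
      have hzr : lm z - lp z = m := hGinvRight m hmem
      obtain ⟨hz1, hz2⟩ := Set.mem_Icc.mp hz
      refine ⟨z, fun m' => ?_⟩
      simp only [Psi, if_neg (not_le.mpr hA), if_pos hB]
      by_cases hA' : m' ≤ lm (-1) - lp (-1)
      · rw [if_pos hA']
        have hP1 := hP z hz (-1) hm1
        have hkey : (1 + z) * (m' - (lm (-1) - lp (-1))) ≤ 0 :=
          mul_nonpos_of_nonneg_of_nonpos (by linarith) (by linarith)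
        nlinarith [hP1, hkey]
      · rw [if_neg hA']
        push_neg at hA'
        by_cases hB' : m' < lm 1 - lp 1
        · rw [if_pos hB']
          have hmem' : m' ∈ Set.Icc (lm (-1) - lp (-1)) (lm 1 - lp 1) :=
            Set.mem_Icc.mpr ⟨le_of_lt hA', le_of_lt hB'⟩
          have hg := hGinvMem m' hmem'
          have hgr := hGinvRight m' hmem'
          have hP1 := hP z hz (Γinv m') hg
          rw [hgr, hzr] at hP1
          linarith
        · rw [if_neg hB']
          push_neg at hB'
          have hP1 := hP z hz 1 hp1
          have hkey : 0 ≤ (1 - z) * (m' - (lm 1 - lp 1)) :=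
            mul_nonneg (by linarith) (by linarith)
          nlinarith [hP1, hkey]
    · push_neg at hB
      refine ⟨1, fun m' => ?_⟩
      simp only [Psi, if_neg (not_le.mpr hA), if_neg (not_lt.mpr hB)]
      by_cases hA' : m' ≤ lm (-1) - lp (-1)
      · rw [if_pos hA']; linarith
      · rw [if_neg hA']
        push_neg at hA'
        by_cases hB' : m' < lm 1 - lp 1
        · rw [if_pos hB']
          have hmem' : m' ∈ Set.Icc (lm (-1) - lp (-1)) (lm 1 - lp 1) :=
            Set.mem_Icc.mpr ⟨le_of_lt hA', le_of_lt hB'⟩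
          have hg := hGinvMem m' hmem'
          have hgr := hGinvRight m' hmem'
          have : lp 1 ≤ lp (Γinv m') := hlpm hg hp1 (Set.mem_Icc.mp hg).2
          linarith
        · rw [if_neg hB']; linarith
end

section
/- If ℓ₋′(x)·ℓ₊″(x) ≥ ℓ₋″(x)·ℓ₊′(x) for all x ∈ (−1,1), then the potential well Ψ is convex on ℝ (condition (C) of Lemma 2.1). -/
open scoped BigOperators

lemma deriv_nonneg_of_monotoneOn_aux {f : ℝ → ℝ} {f' x : ℝ}
    (hx : x ∈ Set.Ioo (-1:ℝ) 1) (hm : MonotoneOn f (Set.Icc (-1) 1))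
    (hd : HasDerivAt f f' x) : 0 ≤ f' := by
  have h := (hd.hasDerivWithinAt (s := Set.Ioi x))
  rw [hasDerivWithinAt_iff_tendsto_slope] at h
  have hset : Set.Ioi x \ {x} = Set.Ioi x := by
    apply Set.diff_singleton_eq_self; simp
  rw [hset] at h
  refine ge_of_tendsto h ?_
  filter_upwards [Ioo_mem_nhdsGT_of_mem (Set.left_mem_Ico.2 hx.2)] with y hy
  rw [slope_def_field]
  apply div_nonneg
  · have : f x ≤ f y :=
      hm ⟨hx.1.le, hx.2.le⟩ ⟨by linarith [hx.1, hy.1], hy.2.le⟩ hy.1.le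
    linarith
  · linarith [hy.1]

theorem stmt_3
    (lp lm lp' lm' lp'' lm'' Γinv : ℝ → ℝ)
    (hlpc : ContinuousOn lp (Set.Icc (-1) 1))
    (hlmc : ContinuousOn lm (Set.Icc (-1) 1))
    (hlpd : ∀ x ∈ Set.Ioo (-1:ℝ) 1, HasDerivAt lp (lp' x) x)
    (hlmd : ∀ x ∈ Set.Ioo (-1:ℝ) 1, HasDerivAt lm (lm' x) x)
    (hlpd2 : ∀ x ∈ Set.Ioo (-1:ℝ) 1, HasDerivAt lp' (lp'' x) x)
    (hlmd2 : ∀ x ∈ Set.Ioo (-1:ℝ) 1, HasDerivAt lm' (lm'' x) x)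
    (hlpm : AntitoneOn lp (Set.Icc (-1) 1))
    (hlmm : MonotoneOn lm (Set.Icc (-1) 1))
    (hslope : ∀ x ∈ Set.Ioo (-1:ℝ) 1, 0 < lm' x - lp' x)
    (hGinvMem : ∀ m ∈ Set.Icc (lm (-1) - lp (-1)) (lm 1 - lp 1), Γinv m ∈ Set.Icc (-1:ℝ) 1)
    (hGinvRight : ∀ m ∈ Set.Icc (lm (-1) - lp (-1)) (lm 1 - lp 1), lm (Γinv m) - lp (Γinv m) = m)
    (hGinvLeft : ∀ g ∈ Set.Icc (-1:ℝ) 1, Γinv (lm g - lp g) = g)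
    (hC : ∀ x ∈ Set.Ioo (-1:ℝ) 1, lm'' x * lp' x ≤ lm' x * lp'' x) :
    ConvexOn ℝ Set.univ (Psi lp lm Γinv) := by
  have hmem1 : (-1:ℝ) ∈ Set.Icc (-1:ℝ) 1 := by norm_num
  have hmem2 : (1:ℝ) ∈ Set.Icc (-1:ℝ) 1 := by norm_num
  -- derivative signs
  have hlm'0 : ∀ x ∈ Set.Ioo (-1:ℝ) 1, 0 ≤ lm' x := fun x hx =>
    deriv_nonneg_of_monotoneOn_aux hx hlmm (hlmd x hx)
  have hlp'0 : ∀ x ∈ Set.Ioo (-1:ℝ) 1, lp' x ≤ 0 := by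
    intro x hx
    have hmono : MonotoneOn (fun g => -lp g) (Set.Icc (-1:ℝ) 1) := by
      intro a ha b hb hab
      simp only [neg_le_neg_iff]
      exact hlpm ha hb hab
    have := deriv_nonneg_of_monotoneOn_aux hx hmono ((hlpd x hx).neg)
    linarith
  -- monotonicity of the slope function s = (lm'+lp')/(lm'-lp')
  have hsd : ∀ x ∈ Set.Ioo (-1:ℝ) 1,
      HasDerivAt (fun g => (lm' g + lp' g) / (lm' g - lp' g))
        (((lm'' x + lp'' x) * (lm' x - lp' x) - (lm' x + lp' x) * (lm'' x - lp'' x))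
          / (lm' x - lp' x) ^ 2) x := by
    intro x hx
    exact ((hlmd2 x hx).add (hlpd2 x hx)).div ((hlmd2 x hx).sub (hlpd2 x hx))
      (ne_of_gt (hslope x hx))
  have hsmono : MonotoneOn (fun g => (lm' g + lp' g) / (lm' g - lp' g))
      (Set.Ioo (-1:ℝ) 1) := by
    apply monotoneOn_of_hasDerivWithinAt_nonneg (convex_Ioo _ _)
      (f' := fun x => ((lm'' x + lp'' x) * (lm' x - lp' x) - (lm' x + lp' x) * (lm'' x - lp'' x))
          / (lm' x - lp' x) ^ 2)
    · intro x hx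
      exact (hsd x hx).continuousAt.continuousWithinAt
    · intro x hx
      rw [interior_Ioo] at hx
      exact (hsd x hx).hasDerivWithinAt
    · intro x hx
      rw [interior_Ioo] at hx
      apply div_nonneg _ (sq_nonneg _)
      nlinarith [hC x hx]
  -- key: minimizing supporting parameters at each point
  have key : ∀ m : ℝ, ∃ t g₀ : ℝ, t ∈ Set.Icc (-1:ℝ) 1 ∧ g₀ ∈ Set.Icc (-1:ℝ) 1 ∧
      Psi lp lm Γinv m = lp g₀ + lm g₀ + t * (m - (lm g₀ - lp g₀)) ∧
      ∀ g ∈ Set.Icc (-1:ℝ) 1,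
        lp g₀ + lm g₀ - t * (lm g₀ - lp g₀) ≤ lp g + lm g - t * (lm g - lp g) := by
    intro m
    by_cases h1 : m ≤ lm (-1) - lp (-1)
    · refine ⟨-1, -1, by norm_num, hmem1, ?_, ?_⟩
      · unfold Psi; rw [if_pos h1]; ring
      · intro g hg
        have := hlmm hmem1 hg hg.1
        nlinarith
    by_cases h2 : m < lm 1 - lp 1
    · have hm' : m ∈ Set.Icc (lm (-1) - lp (-1)) (lm 1 - lp 1) :=
        ⟨(not_le.1 h1).le, h2.le⟩
      set g₀ := Γinv m with hg₀def
      have hg₀ : g₀ ∈ Set.Icc (-1:ℝ) 1 := hGinvMem m hm'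
      have hΓg₀ : lm g₀ - lp g₀ = m := hGinvRight m hm'
      have hg₀o : g₀ ∈ Set.Ioo (-1:ℝ) 1 := by
        constructor
        · rcases lt_or_eq_of_le hg₀.1 with h | h
          · exact h
          · exfalso; apply h1; rw [← hΓg₀, ← h]
        · rcases lt_or_eq_of_le hg₀.2 with h | h
          · exact h
          · exfalso; rw [← hΓg₀, h] at h2; exact lt_irrefl _ h2
      set t := (lm' g₀ + lp' g₀) / (lm' g₀ - lp' g₀) with htdef
      have ht : t ∈ Set.Icc (-1:ℝ) 1 := by
        constructor
        · rw [htdef, le_div_iff₀ (hslope g₀ hg₀o)]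
          have := hlm'0 g₀ hg₀o
          nlinarith
        · rw [htdef, div_le_one (hslope g₀ hg₀o)]
          have := hlp'0 g₀ hg₀o
          linarith
      refine ⟨t, g₀, ht, hg₀, ?_, ?_⟩
      · unfold Psi; rw [if_neg h1, if_pos h2, hΓg₀]; ring
      · -- φ g = lp g + lm g - t*(lm g - lp g) is minimized at g₀
        have hφd : ∀ x ∈ Set.Ioo (-1:ℝ) 1,
            HasDerivAt (fun g => lp g + lm g - t * (lm g - lp g))
              ((lp' x + lm' x) - t * (lm' x - lp' x)) x := by
          intro x hx
          exact ((hlpd x hx).add (hlmd x hx)).sub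
            (((hlmd x hx).sub (hlpd x hx)).const_mul t)
        have hφc : ContinuousOn (fun g => lp g + lm g - t * (lm g - lp g))
            (Set.Icc (-1:ℝ) 1) :=
          (hlpc.add hlmc).sub (continuousOn_const.mul (hlmc.sub hlpc))
        have hsign : ∀ x ∈ Set.Ioo (-1:ℝ) 1,
            (lp' x + lm' x) - t * (lm' x - lp' x)
              = (lm' x - lp' x) * ((lm' x + lp' x) / (lm' x - lp' x) - t) := by
          intro x hx
          have h := (hslope x hx).ne'
          field_simp
          ring
        have hanti : AntitoneOn (fun g => lp g + lm g - t * (lm g - lp g))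
            (Set.Icc (-1:ℝ) g₀) := by
          apply antitoneOn_of_hasDerivWithinAt_nonpos (convex_Icc _ _)
            (f' := fun x => (lp' x + lm' x) - t * (lm' x - lp' x))
          · exact hφc.mono (Set.Icc_subset_Icc_right hg₀.2)
          · intro x hx
            rw [interior_Icc] at hx
            exact (hφd x ⟨hx.1, hx.2.trans hg₀o.2⟩).hasDerivWithinAt
          · intro x hx
            rw [interior_Icc] at hx
            have hxo : x ∈ Set.Ioo (-1:ℝ) 1 := ⟨hx.1, hx.2.trans hg₀o.2⟩
            rw [hsign x hxo]
            have hle : (lm' x + lp' x) / (lm' x - lp' x)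
                ≤ (lm' g₀ + lp' g₀) / (lm' g₀ - lp' g₀) :=
              hsmono hxo hg₀o hx.2.le
            rw [htdef]
            apply mul_nonpos_of_nonneg_of_nonpos (hslope x hxo).le
            linarith
        have hmono : MonotoneOn (fun g => lp g + lm g - t * (lm g - lp g))
            (Set.Icc g₀ 1) := by
          apply monotoneOn_of_hasDerivWithinAt_nonneg (convex_Icc _ _)
            (f' := fun x => (lp' x + lm' x) - t * (lm' x - lp' x))
          · exact hφc.mono (Set.Icc_subset_Icc_left hg₀.1)
          · intro x hx
            rw [interior_Icc] at hx
            exact (hφd x ⟨hg₀o.1.trans hx.1, hx.2⟩).hasDerivWithinAt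
          · intro x hx
            rw [interior_Icc] at hx
            have hxo : x ∈ Set.Ioo (-1:ℝ) 1 := ⟨hg₀o.1.trans hx.1, hx.2⟩
            rw [hsign x hxo]
            have hle : (lm' g₀ + lp' g₀) / (lm' g₀ - lp' g₀)
                ≤ (lm' x + lp' x) / (lm' x - lp' x) :=
              hsmono hg₀o hxo hx.1.le
            rw [htdef]
            apply mul_nonneg (hslope x hxo).le
            linarith
        intro g hg
        rcases le_total g g₀ with hle | hle
        · exact hanti ⟨hg.1, hle⟩ ⟨hg₀.1, le_refl _⟩ hle
        · exact hmono ⟨le_refl _, hg₀.2⟩ ⟨hle, hg.2⟩ hle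
    · refine ⟨1, 1, by norm_num, hmem2, ?_, ?_⟩
      · unfold Psi; rw [if_neg h1, if_neg h2]; ring
      · intro g hg
        have := hlpm hg hmem2 hg.2
        nlinarith
  -- lower bound: each supporting line lies below Psi everywhere
  have lb : ∀ t ∈ Set.Icc (-1:ℝ) 1, ∀ g₀ ∈ Set.Icc (-1:ℝ) 1,
      (∀ g ∈ Set.Icc (-1:ℝ) 1,
        lp g₀ + lm g₀ - t * (lm g₀ - lp g₀) ≤ lp g + lm g - t * (lm g - lp g)) →
      ∀ x : ℝ, lp g₀ + lm g₀ + t * (x - (lm g₀ - lp g₀)) ≤ Psi lp lm Γinv x := by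
    intro t ht g₀ hg₀ hmin x
    unfold Psi
    split_ifs with hx1 hx2
    · have h := hmin (-1) hmem1
      nlinarith [mul_nonneg (by linarith [ht.1] : (0:ℝ) ≤ 1 + t)
        (by linarith : (0:ℝ) ≤ (lm (-1) - lp (-1)) - x)]
    · have hx' : x ∈ Set.Icc (lm (-1) - lp (-1)) (lm 1 - lp 1) :=
        ⟨(not_le.1 hx1).le, hx2.le⟩
      have h := hmin (Γinv x) (hGinvMem x hx')
      have hΓ : lm (Γinv x) - lp (Γinv x) = x := hGinvRight x hx'
      rw [hΓ] at h
      linarith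
    · have h := hmin 1 hmem2
      nlinarith [mul_nonneg (by linarith [ht.2] : (0:ℝ) ≤ 1 - t)
        (by linarith [not_lt.1 hx2] : (0:ℝ) ≤ x - (lm 1 - lp 1))]
  -- conclude convexity
  refine ⟨convex_univ, ?_⟩
  intro x _ y _ a b ha hb hab
  obtain ⟨t, g₀, ht, hg₀, hval, hmin⟩ := key (a * x + b * y)
  have h1 := lb t ht g₀ hg₀ hmin x
  have h2 := lb t ht g₀ hg₀ hmin y
  have hb' : b = 1 - a := by linarith
  subst hb'
  simp only [smul_eq_mul]
  have h1' := mul_le_mul_of_nonneg_left h1 ha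
  have h2' := mul_le_mul_of_nonneg_left h2 hb
  nlinarith [hval]
end

section
/- Conversely, if the potential well Ψ is convex on ℝ, then ℓ₋′(x)·ℓ₊″(x) ≥ ℓ₋″(x)·ℓ₊′(x) for all x ∈ (−1,1); that is, under Assumption 1 condition (C) is necessary (as well as sufficient) for convexity of Ψ (remark following Lemma 2.1). -/
open scoped BigOperators

theorem stmt_4
    (lp lm lp' lm' lp'' lm'' Γinv : ℝ → ℝ)
    (hlpc : ContinuousOn lp (Set.Icc (-1) 1))
    (hlmc : ContinuousOn lm (Set.Icc (-1) 1))
    (hlpd : ∀ x ∈ Set.Ioo (-1:ℝ) 1, HasDerivAt lp (lp' x) x)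
    (hlmd : ∀ x ∈ Set.Ioo (-1:ℝ) 1, HasDerivAt lm (lm' x) x)
    (hlpd2 : ∀ x ∈ Set.Ioo (-1:ℝ) 1, HasDerivAt lp' (lp'' x) x)
    (hlmd2 : ∀ x ∈ Set.Ioo (-1:ℝ) 1, HasDerivAt lm' (lm'' x) x)
    (hlpm : AntitoneOn lp (Set.Icc (-1) 1))
    (hlmm : MonotoneOn lm (Set.Icc (-1) 1))
    (hslope : ∀ x ∈ Set.Ioo (-1:ℝ) 1, 0 < lm' x - lp' x)
    (hGinvMem : ∀ m ∈ Set.Icc (lm (-1) - lp (-1)) (lm 1 - lp 1), Γinv m ∈ Set.Icc (-1:ℝ) 1)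
    (hGinvRight : ∀ m ∈ Set.Icc (lm (-1) - lp (-1)) (lm 1 - lp 1), lm (Γinv m) - lp (Γinv m) = m)
    (hGinvLeft : ∀ g ∈ Set.Icc (-1:ℝ) 1, Γinv (lm g - lp g) = g)
    (hcvx : ConvexOn ℝ Set.univ (Psi lp lm Γinv)) :
    ∀ x ∈ Set.Ioo (-1:ℝ) 1, lm'' x * lp' x ≤ lm' x * lp'' x := by
  have h1 : (-1:ℝ) < 1 := by norm_num
  set Γ : ℝ → ℝ := fun g => lm g - lp g with hΓdef
  have hΓd : ∀ y ∈ Set.Ioo (-1:ℝ) 1, HasDerivAt Γ (lm' y - lp' y) y :=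
    fun y hy => (hlmd y hy).sub (hlpd y hy)
  have hΓc : ContinuousOn Γ (Set.Icc (-1:ℝ) 1) := hlmc.sub hlpc
  have hΓmono : StrictMonoOn Γ (Set.Icc (-1:ℝ) 1) := by
    apply strictMonoOn_of_deriv_pos (convex_Icc _ _) hΓc
    intro y hy
    rw [interior_Icc] at hy
    rw [(hΓd y hy).deriv]
    exact hslope y hy
  -- derivative of Psi at interior points of the middle region
  have key : ∀ g ∈ Set.Ioo (-1:ℝ) 1,
      HasDerivAt (Psi lp lm Γinv) ((lp' g + lm' g) / (lm' g - lp' g)) (Γ g) := by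
    intro g hg
    have hgI : g ∈ Set.Icc (-1:ℝ) 1 := Set.Ioo_subset_Icc_self hg
    have hlt1 : Γ (-1) < Γ g := hΓmono (Set.left_mem_Icc.2 h1.le) hgI hg.1
    have hlt2 : Γ g < Γ 1 := hΓmono hgI (Set.right_mem_Icc.2 h1.le) hg.2
    have hsnhds : Set.Ioo (Γ (-1)) (Γ 1) ∈ nhds (Γ g) := Ioo_mem_nhds hlt1 hlt2
    have hsub : Set.Ioo (Γ (-1)) (Γ 1) ⊆ Set.Icc (lm (-1) - lp (-1)) (lm 1 - lp 1) :=
      Set.Ioo_subset_Icc_self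
    have hginv_icc : ∀ m ∈ Set.Ioo (Γ (-1)) (Γ 1), Γinv m ∈ Set.Icc (-1:ℝ) 1 :=
      fun m hm => hGinvMem m (hsub hm)
    have hright : ∀ m ∈ Set.Ioo (Γ (-1)) (Γ 1), Γ (Γinv m) = m :=
      fun m hm => hGinvRight m (hsub hm)
    have hΓinvg : Γinv (Γ g) = g := hGinvLeft g hgI
    have hinvmono : StrictMonoOn Γinv (Set.Ioo (Γ (-1)) (Γ 1)) := by
      intro m1 hm1 m2 hm2 hlt
      by_contra hle
      push_neg at hle
      have h2 := hΓmono.monotoneOn (hginv_icc m2 hm2) (hginv_icc m1 hm1) hle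
      rw [hright m1 hm1, hright m2 hm2] at h2
      exact absurd h2 (not_le.2 hlt)
    have himg : Γinv '' Set.Ioo (Γ (-1)) (Γ 1) ∈ nhds (Γinv (Γ g)) := by
      rw [hΓinvg]
      apply Filter.mem_of_superset (Ioo_mem_nhds hg.1 hg.2)
      intro y hy
      exact ⟨Γ y, ⟨hΓmono (Set.left_mem_Icc.2 h1.le) (Set.Ioo_subset_Icc_self hy) hy.1,
        hΓmono (Set.Ioo_subset_Icc_self hy) (Set.right_mem_Icc.2 h1.le) hy.2⟩,
        hGinvLeft y (Set.Ioo_subset_Icc_self hy)⟩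
    have hcont : ContinuousAt Γinv (Γ g) :=
      hinvmono.continuousAt_of_image_mem_nhds hsnhds himg
    have hΓ'ne : lm' g - lp' g ≠ 0 := (hslope g hg).ne'
    have hΓder : HasDerivAt Γ (lm' g - lp' g) (Γinv (Γ g)) := by
      rw [hΓinvg]; exact hΓd g hg
    have hinvder : HasDerivAt Γinv ((lm' g - lp' g)⁻¹) (Γ g) :=
      HasDerivAt.of_local_left_inverse hcont hΓder hΓ'ne
        (Filter.eventually_of_mem hsnhds hright)
    have hlpg : HasDerivAt lp (lp' g) (Γinv (Γ g)) := by rw [hΓinvg]; exact hlpd g hg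
    have hlmg : HasDerivAt lm (lm' g) (Γinv (Γ g)) := by rw [hΓinvg]; exact hlmd g hg
    have hmid : HasDerivAt (fun m => lp (Γinv m) + lm (Γinv m))
        ((lp' g + lm' g) / (lm' g - lp' g)) (Γ g) := by
      have hsum := (hlpg.comp (Γ g) hinvder).add (hlmg.comp (Γ g) hinvder)
      have : lp' g * (lm' g - lp' g)⁻¹ + lm' g * (lm' g - lp' g)⁻¹
          = (lp' g + lm' g) / (lm' g - lp' g) := by ring
      rw [this] at hsum
      exact hsum
    have heq : (fun m => lp (Γinv m) + lm (Γinv m)) =ᶠ[nhds (Γ g)] Psi lp lm Γinv := by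
      filter_upwards [hsnhds] with m hm
      have hnle : ¬ m ≤ lm (-1) - lp (-1) := not_le.2 hm.1
      have hlt : m < lm 1 - lp 1 := hm.2
      simp only [Psi, if_neg hnle, if_pos hlt]
    exact heq.hasDerivAt_iff.1 hmid
  -- monotonicity of the derivative quotient
  have hmono : ∀ a ∈ Set.Ioo (-1:ℝ) 1, ∀ b ∈ Set.Ioo (-1:ℝ) 1, a < b →
      (lp' a + lm' a) / (lm' a - lp' a) ≤ (lp' b + lm' b) / (lm' b - lp' b) := by
    intro a ha b hb hab
    have hΓab : Γ a < Γ b :=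
      hΓmono (Set.Ioo_subset_Icc_self ha) (Set.Ioo_subset_Icc_self hb) hab
    have hle1 := hcvx.le_slope_of_hasDerivAt (Set.mem_univ (Γ a)) (Set.mem_univ (Γ b))
      hΓab (key a ha)
    have hle2 := hcvx.slope_le_of_hasDerivAt (Set.mem_univ (Γ a)) (Set.mem_univ (Γ b))
      hΓab (key b hb)
    exact hle1.trans hle2
  -- conclude via the derivative of the quotient
  intro x hx
  have hden := hslope x hx
  have hh : HasDerivAt (fun g => (lp' g + lm' g) / (lm' g - lp' g))
      (((lp'' x + lm'' x) * (lm' x - lp' x) - (lp' x + lm' x) * (lm'' x - lp'' x))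
        / (lm' x - lp' x) ^ 2) x :=
    HasDerivAt.div ((hlpd2 x hx).add (hlmd2 x hx)) ((hlmd2 x hx).sub (hlpd2 x hx)) hden.ne'
  have hH : 0 ≤ ((lp'' x + lm'' x) * (lm' x - lp' x) - (lp' x + lm' x) * (lm'' x - lp'' x))
      / (lm' x - lp' x) ^ 2 := by
    have ht := hasDerivAt_iff_tendsto_slope.1 hh
    have hle : nhdsWithin x (Set.Ioi x) ≤ nhdsWithin x ({x}ᶜ) := by
      apply nhdsWithin_mono
      intro y hy
      exact Set.mem_compl_singleton_iff.2 (ne_of_gt hy)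
    refine ge_of_tendsto (ht.mono_left hle) ?_
    filter_upwards [Ioo_mem_nhdsGT_of_mem (Set.mem_Ico.2 ⟨le_refl x, hx.2⟩)] with y hy
    have hyI : y ∈ Set.Ioo (-1:ℝ) 1 := ⟨lt_trans hx.1 hy.1, hy.2⟩
    rw [slope_def_field]
    apply div_nonneg
    · exact sub_nonneg.2 (hmono x hx y hyI hy.1)
    · exact (sub_pos.2 hy.1).le
  have hpos : (0:ℝ) < (lm' x - lp' x) ^ 2 := pow_pos hden 2
  rw [div_nonneg_iff] at hH
  rcases hH with ⟨hnum, -⟩ | ⟨-, hle0⟩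
  · nlinarith [hnum]
  · linarith [hpos]
end

section
/- Lagrange duality for the box-constrained linear program (Lemma A.1): for any a ∈ ℝⁿ, sup over z ∈ Z of (1/n)·zᵀa equals inf over σ ∈ ℝᵖ with σ ≥ 0 componentwise of [−bᵀσ + (1/n)·‖Fᵀσ + a‖₁], and both the supremum and the infimum are attained. -/
/-!
The primal maximum is attained because the feasible set is compact. Writing the box as the
inequalities `z ≤ 1`, `-z ≤ 1`, LP strong duality supplies multipliers `σ, λ, μ ≥ 0` with
`Fᵀσ/n + a/n = λ - μ` and `-b ⬝ σ + ∑ (λ + μ)` equal to the maximum; as `|λ - μ| ≤ λ + μ`, the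
dual objective at `σ` is at most the maximum, and weak duality (`|z j| ≤ 1`) gives the reverse.

For `max c ⬝ x` subject to `A x ≤ d`, strong duality is Farkas' lemma for the cone generated by
the rows `(A k, d k)` and `(0, 1)`. Farkas' lemma is Hahn–Banach separation from a finitely
generated cone, which is closed: by the conical Carathéodory theorem it is the finite union of
the cones over linearly independent subfamilies, each the image of an orthant under an injective
linear map.
-/

def ZSet (p n : ℕ) (F : Fin p → Fin n → ℝ) (b : Fin p → ℝ) : Set (Fin n → ℝ) :=
  {z | (∀ j, z j ∈ Set.Icc (-1:ℝ) 1) ∧ ∀ i, b i ≤ (1 / (n : ℝ)) * ∑ j, F i j * z j}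

open Matrix Set

section ConicalCaratheodory

variable {𝕜 ι E : Type*} [Field 𝕜] [LinearOrder 𝕜] [IsStrictOrderedRing 𝕜]
  [AddCommGroup E] [Module 𝕜 E] [DecidableEq ι]

theorem exists_sum_erase_eq_of_not_linearIndepOn {v : ι → E} {s : Finset ι} {c : ι → 𝕜}
    (hc : ∀ i ∈ s, 0 ≤ c i) (hdep : ¬ LinearIndepOn 𝕜 v (s : Set ι)) :
    ∃ j ∈ s, ∃ c' : ι → 𝕜, (∀ i ∈ s, 0 ≤ c' i) ∧
      ∑ i ∈ s.erase j, c' i • v i = ∑ i ∈ s, c i • v i := by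
  obtain ⟨g, hg, i₀, hi₀s, hi₀⟩ := not_linearIndepOn_finset_iff.mp hdep
  wlog hpos : 0 < g i₀ generalizing g
  · refine this (-g) (by simp [neg_smul, hg]) (neg_ne_zero.mpr hi₀) ?_
    simpa using lt_of_le_of_ne (not_lt.mp hpos) hi₀
  obtain ⟨j, hj, hmin⟩ := Finset.exists_min_image (s.filter (0 < g ·)) (fun i => c i / g i)
    ⟨i₀, Finset.mem_filter.mpr ⟨hi₀s, hpos⟩⟩
  rw [Finset.mem_filter] at hj
  -- remove from `c` the largest multiple of `g` keeping all coefficients nonnegative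
  set t := c j / g j
  refine ⟨j, hj.1, fun i => c i - t * g i, fun i hi => ?_, ?_⟩
  · rcases lt_or_ge 0 (g i) with hgi | hgi
    · have := (le_div_iff₀ hgi).mp (hmin i (Finset.mem_filter.mpr ⟨hi, hgi⟩))
      linarith
    · have : 0 ≤ t := div_nonneg (hc j hj.1) hj.2.le
      nlinarith [hc i hi]
  · have hzero : c j - t * g j = 0 := by simp [t, hj.2.ne']
    rw [Finset.sum_erase _ (by simp [hzero])]
    simp only [sub_smul, Finset.sum_sub_distrib, mul_smul, ← Finset.smul_sum, hg, smul_zero,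
      sub_zero]

theorem exists_linearIndepOn_sum_eq (v : ι → E) (s : Finset ι) (c : ι → 𝕜)
    (hc : ∀ i ∈ s, 0 ≤ c i) :
    ∃ t ⊆ s, LinearIndepOn 𝕜 v (t : Set ι) ∧ ∃ c' : ι → 𝕜, (∀ i ∈ t, 0 ≤ c' i) ∧
      ∑ i ∈ t, c' i • v i = ∑ i ∈ s, c i • v i := by
  induction s using Finset.strongInduction generalizing c with
  | H s ih =>
    by_cases hind : LinearIndepOn 𝕜 v (s : Set ι)
    · exact ⟨s, subset_rfl, hind, c, hc, rfl⟩
    obtain ⟨j, hj, c', hc', hsum⟩ := exists_sum_erase_eq_of_not_linearIndepOn hc hind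
    obtain ⟨t, hts, ht, c'', hc'', hsum'⟩ := ih (s.erase j) (Finset.erase_ssubset hj) c'
      fun i hi => hc' i (Finset.mem_of_mem_erase hi)
    exact ⟨t, hts.trans (Finset.erase_subset j s), ht, c'', hc'', hsum'.trans hsum⟩

end ConicalCaratheodory

section FinitelyGeneratedCone

theorem PointedCone.mem_hull_range_iff {𝕜 ι E : Type*} [Semiring 𝕜] [PartialOrder 𝕜]
    [IsOrderedRing 𝕜] [AddCommMonoid E] [Module 𝕜 E] [Fintype ι] {v : ι → E} {x : E} :
    x ∈ PointedCone.hull 𝕜 (range v) ↔ ∃ c : ι → 𝕜, 0 ≤ c ∧ ∑ i, c i • v i = x := by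
  rw [Submodule.mem_span_range_iff_exists_fun]
  constructor
  · rintro ⟨c, rfl⟩
    exact ⟨fun i => c i, fun i => (c i).2, rfl⟩
  · rintro ⟨c, hc, rfl⟩
    exact ⟨fun i => ⟨c i, hc i⟩, rfl⟩

variable {ι E : Type*} [Fintype ι] [AddCommGroup E] [TopologicalSpace E]
  [IsTopologicalAddGroup E] [Module ℝ E] [ContinuousSMul ℝ E] [T2Space E]

theorem PointedCone.isClosed_hull_range_of_linearIndependent {w : ι → E}
    (hw : LinearIndependent ℝ w) : IsClosed (PointedCone.hull ℝ (range w) : Set E) := by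
  have himage : (PointedCone.hull ℝ (range w) : Set E) =
      Fintype.linearCombination ℝ w '' Ici 0 := by
    ext x
    simp [PointedCone.mem_hull_range_iff, Fintype.linearCombination_apply]
  rw [himage]
  refine (LinearMap.isClosedEmbedding_of_injective ?_).isClosedMap _ isClosed_Ici
  exact LinearMap.ker_eq_bot.mpr (linearIndependent_iff_injective_fintypeLinearCombination.mp hw)

theorem PointedCone.isClosed_hull_range (v : ι → E) :
    IsClosed (PointedCone.hull ℝ (range v) : Set E) := by
  classical
  have hunion : (PointedCone.hull ℝ (range v) : Set E) =
      ⋃ t : {t : Finset ι // LinearIndepOn ℝ v (t : Set ι)},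
        PointedCone.hull ℝ (range fun i : (t.1 : Set ι) => v i) := by
    refine subset_antisymm (fun x hx => ?_) (iUnion_subset fun t => ?_)
    · obtain ⟨c, hc, rfl⟩ := PointedCone.mem_hull_range_iff.mp hx
      obtain ⟨t, -, ht, c', hc', hsum⟩ :=
        exists_linearIndepOn_sum_eq v Finset.univ c fun i _ => hc i
      refine mem_iUnion.mpr ⟨⟨t, ht⟩, PointedCone.mem_hull_range_iff.mpr
        ⟨fun i => c' i, fun i => hc' i i.2, ?_⟩⟩
      rw [← hsum, ← Finset.sum_coe_sort t]
      rfl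
    · exact Submodule.span_mono (range_subset_iff.mpr fun i => mem_range_self _)
  rw [hunion]
  exact isClosed_iUnion_of_finite fun t =>
    PointedCone.isClosed_hull_range_of_linearIndependent t.2

theorem PointedCone.exists_strongDual_of_notMem_hull_range [LocallyConvexSpace ℝ E] (v : ι → E)
    {x : E} (hx : x ∉ PointedCone.hull ℝ (range v)) :
    ∃ f : StrongDual ℝ E, (∀ i, 0 ≤ f (v i)) ∧ f x < 0 := by
  obtain ⟨f, hf, hfx⟩ := ProperCone.hyperplane_separation_point
    ⟨PointedCone.hull ℝ (range v), PointedCone.isClosed_hull_range v⟩ hx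
  exact ⟨f, fun i => hf _ (PointedCone.subset_hull (mem_range_self i)), hfx⟩

end FinitelyGeneratedCone

section LinearProgramming

variable {m n : Type*} [Fintype m] [Fintype n]

theorem StrongDual.exists_apply_prod_eq (f : StrongDual ℝ ((n → ℝ) × ℝ)) :
    ∃ (w : n → ℝ) (τ : ℝ), ∀ u t, f (u, t) = u ⬝ᵥ w + t * τ := by
  classical
  refine ⟨fun j => f (fun i => if j = i then 1 else 0, 0), f (0, 1), fun u t => ?_⟩
  have hsplit : f (u, t) = f (u, 0) + t * f (0, 1) := by
    rw [← smul_eq_mul, ← map_smul, ← map_add]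
    simp
  have hpi := LinearMap.pi_apply_eq_sum_univ
    ((f : (n → ℝ) × ℝ →ₗ[ℝ] ℝ).comp (LinearMap.inl ℝ (n → ℝ) ℝ)) u
  simp only [LinearMap.comp_apply, LinearMap.inl_apply, ContinuousLinearMap.coe_coe] at hpi
  rw [hsplit, hpi]
  rfl

theorem Matrix.dotProduct_le_dotProduct_of_vecMul_eq {A : Matrix m n ℝ} {d : m → ℝ}
    {c x : n → ℝ} {y : m → ℝ} (hx : A *ᵥ x ≤ d) (hy : 0 ≤ y) (hyA : y ᵥ* A = c) :
    c ⬝ᵥ x ≤ d ⬝ᵥ y := by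
  rw [← hyA, ← dotProduct_mulVec, dotProduct_comm d]
  exact dotProduct_le_dotProduct_of_nonneg_left hx hy

theorem Matrix.exists_dual_optimal (A : Matrix m n ℝ) (d : m → ℝ) (c : n → ℝ) {x : n → ℝ}
    (hx : A *ᵥ x ≤ d) (hmax : ∀ x', A *ᵥ x' ≤ d → c ⬝ᵥ x' ≤ c ⬝ᵥ x) :
    ∃ y, 0 ≤ y ∧ y ᵥ* A = c ∧ d ⬝ᵥ y = c ⬝ᵥ x := by
  let V : Option m → (n → ℝ) × ℝ := fun o => o.elim (0, 1) fun k => (A k, d k)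
  have hmem : (c, c ⬝ᵥ x) ∈ PointedCone.hull ℝ (range V) := by
    by_contra hnot
    obtain ⟨f, hfV, hf⟩ := PointedCone.exists_strongDual_of_notMem_hull_range V hnot
    obtain ⟨w, τ, hfw⟩ := f.exists_apply_prod_eq
    have hτ : 0 ≤ τ := by simpa [V, hfw] using hfV none
    have hAw : ∀ k, 0 ≤ (A *ᵥ w) k + d k * τ := fun k => by
      simpa [V, hfw, mulVec] using hfV (some k)
    rw [hfw] at hf
    -- the separating functional yields a feasible point better than `x`
    set x' := (1 + τ)⁻¹ • (x - w)
    have hx' : A *ᵥ x' ≤ d := by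
      intro k
      have := hx k
      have := hAw k
      simp only [x', mulVec_smul, mulVec_sub, Pi.smul_apply, Pi.sub_apply, smul_eq_mul]
      rw [inv_mul_le_iff₀ (by linarith)]
      nlinarith
    have := hmax x' hx'
    simp only [x', dotProduct_smul, dotProduct_sub, smul_eq_mul] at this
    rw [inv_mul_le_iff₀ (by linarith)] at this
    nlinarith
  obtain ⟨y, hy, hyV⟩ := PointedCone.mem_hull_range_iff.mp hmem
  simp only [Fintype.sum_option, V, Option.elim, Prod.smul_mk, smul_zero, Prod.ext_iff,
    Prod.fst_add, Prod.snd_add, Prod.fst_sum, Prod.snd_sum, zero_add, smul_eq_mul, mul_one] at hyV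
  obtain ⟨hyA, hyd⟩ := hyV
  have hyA' : (y ∘ some) ᵥ* A = c := by rw [vecMul_eq_sum, ← hyA]; rfl
  refine ⟨y ∘ some, fun k => hy (some k), hyA', le_antisymm ?_
    (dotProduct_le_dotProduct_of_vecMul_eq hx (fun k => hy (some k)) hyA')⟩
  have hslack : 0 ≤ y none := hy none
  have hdy : d ⬝ᵥ (y ∘ some) = ∑ k, y (some k) * d k := dotProduct_comm _ _
  linarith

end LinearProgramming

section BoxConstrainedLP

variable {ι κ : Type*} [Fintype ι]

def boxPolytope (G : Matrix κ ι ℝ) (h : κ → ℝ) : Set (ι → ℝ) :=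
  {z | z ∈ Icc (-1) 1 ∧ h ≤ G *ᵥ z}

def boxDualObjective [Fintype κ] (G : Matrix κ ι ℝ) (h : κ → ℝ) (c : ι → ℝ) (σ : κ → ℝ) : ℝ :=
  -(h ⬝ᵥ σ) + ∑ j, |(σ ᵥ* G + c) j|

theorem isCompact_boxPolytope (G : Matrix κ ι ℝ) (h : κ → ℝ) : IsCompact (boxPolytope G h) :=
  isCompact_Icc.inter_right <| isClosed_le continuous_const <|
    continuous_const.matrix_mulVec continuous_id

theorem mulVec_fromRows_le_iff_mem_boxPolytope [DecidableEq ι] (G : Matrix κ ι ℝ) (h : κ → ℝ)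
    (z : ι → ℝ) :
    fromRows (-G) (fromRows 1 (-1)) *ᵥ z ≤ (Sum.elim (-h) (Sum.elim 1 1) : κ ⊕ ι ⊕ ι → ℝ) ↔
      z ∈ boxPolytope G h := by
  simp only [boxPolytope, mem_ofPred_eq, mem_Icc, fromRows_mulVec, Pi.le_def, Sum.forall,
    Sum.elim_inl, Sum.elim_inr, neg_mulVec, one_mulVec, Pi.neg_apply, Pi.one_apply, neg_le_neg_iff]
  exact ⟨fun ⟨hG, hle, hge⟩ => ⟨⟨fun i => neg_le.mp (hge i), hle⟩, hG⟩,
    fun ⟨⟨hge, hle⟩, hG⟩ => ⟨hG, hle, fun i => neg_le.mp (hge i)⟩⟩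

theorem dotProduct_le_sum_abs_of_mem_Icc {w z : ι → ℝ} (hz : z ∈ Icc (-1) 1) :
    z ⬝ᵥ w ≤ ∑ j, |w j| :=
  Finset.sum_le_sum fun j _ => (le_abs_self _).trans <| by
    rw [abs_mul]
    exact mul_le_of_le_one_left (abs_nonneg _) (abs_le.mpr ⟨hz.1 j, hz.2 j⟩)

theorem dotProduct_le_boxDualObjective [Fintype κ] {G : Matrix κ ι ℝ} {h : κ → ℝ} {c z : ι → ℝ}
    {σ : κ → ℝ} (hz : z ∈ boxPolytope G h) (hσ : 0 ≤ σ) :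
    z ⬝ᵥ c ≤ boxDualObjective G h c σ := by
  have hconstr : h ⬝ᵥ σ ≤ (G *ᵥ z) ⬝ᵥ σ := dotProduct_le_dotProduct_of_nonneg_right hz.2 hσ
  have hsplit : z ⬝ᵥ c = z ⬝ᵥ (σ ᵥ* G + c) - (G *ᵥ z) ⬝ᵥ σ := by
    rw [dotProduct_add, dotProduct_comm (G *ᵥ z), dotProduct_mulVec, dotProduct_comm z (σ ᵥ* G)]
    ring
  have hbox := dotProduct_le_sum_abs_of_mem_Icc (w := σ ᵥ* G + c) hz.1
  rw [boxDualObjective]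
  linarith

theorem exists_dotProduct_eq_boxDualObjective [Fintype κ] {G : Matrix κ ι ℝ} {h : κ → ℝ}
    (c : ι → ℝ) (hne : (boxPolytope G h).Nonempty) :
    ∃ z ∈ boxPolytope G h, ∃ σ, 0 ≤ σ ∧ z ⬝ᵥ c = boxDualObjective G h c σ := by
  classical
  obtain ⟨z, hz, hmax⟩ := (isCompact_boxPolytope G h).exists_isMaxOn (f := (· ⬝ᵥ c)) hne
    (continuous_id.dotProduct continuous_const).continuousOn
  obtain ⟨y, hy, hyA, hyd⟩ := exists_dual_optimal (fromRows (-G) (fromRows 1 (-1)))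
    (Sum.elim (-h) (Sum.elim 1 1)) c ((mulVec_fromRows_le_iff_mem_boxPolytope G h z).mpr hz)
    fun z' hz' => by
      simpa only [dotProduct_comm c] using
        isMaxOn_iff.mp hmax z' ((mulVec_fromRows_le_iff_mem_boxPolytope G h z').mp hz')
  -- the multipliers of the constraints `h ≤ G *ᵥ z`, `z ≤ 1` and `-z ≤ 1`
  set σ := y ∘ Sum.inl
  set l := y ∘ Sum.inr ∘ Sum.inl
  set u := y ∘ Sum.inr ∘ Sum.inr
  have hc : σ ᵥ* G + c = l - u := by
    rw [← hyA]
    ext j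
    simp only [vecMul_fromRows, vecMul_neg, vecMul_one, Pi.add_apply, Pi.neg_apply,
      Function.comp_apply, add_neg_cancel_left, Pi.sub_apply, σ, l, u]
    ring
  have hd : Sum.elim (-h) (Sum.elim 1 1) ⬝ᵥ y = -(h ⬝ᵥ σ) + ∑ j, (l j + u j) := by
    simp [dotProduct, Fintype.sum_sum_type, σ, l, u, Finset.sum_add_distrib]
  refine ⟨z, hz, σ, fun i => hy _,
    le_antisymm (dotProduct_le_boxDualObjective hz fun i => hy _) ?_⟩
  rw [dotProduct_comm, ← hyd, hd, boxDualObjective, hc]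
  gcongr with j
  have hl : 0 ≤ l j := hy _
  have hu : 0 ≤ u j := hy _
  rw [Pi.sub_apply]
  exact abs_le.mpr ⟨by linarith, by linarith⟩

theorem boxDualObjective_smul [Fintype κ] {r : ℝ} (hr : 0 ≤ r)
    (F : Matrix κ ι ℝ) (h : κ → ℝ) (a : ι → ℝ) (σ : κ → ℝ) :
    boxDualObjective (r • F) h (r • a) σ = -(h ⬝ᵥ σ) + r * ∑ j, |(σ ᵥ* F + a) j| := by
  rw [boxDualObjective, vecMul_smul, ← smul_add, Finset.mul_sum]
  congr 1
  refine Finset.sum_congr rfl fun j _ => ?_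
  rw [Pi.smul_apply, smul_eq_mul, abs_mul, abs_of_nonneg hr]

end BoxConstrainedLP

theorem ZSet_eq_boxPolytope (p n : ℕ) (F : Fin p → Fin n → ℝ) (b : Fin p → ℝ) :
    ZSet p n F b = boxPolytope ((1 / (n : ℝ)) • F : Matrix (Fin p) (Fin n) ℝ) b := by
  ext z
  simp [ZSet, boxPolytope, Pi.le_def, mulVec, dotProduct, Finset.mul_sum, mul_assoc, forall_and]

theorem stmt_5_general (p n : ℕ)
    (F : Fin p → Fin n → ℝ) (b : Fin p → ℝ) (a : Fin n → ℝ)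
    (hZ : (ZSet p n F b).Nonempty) :
    ∃ z ∈ ZSet p n F b, ∃ σ : Fin p → ℝ, (∀ i, 0 ≤ σ i) ∧
      (∀ z' ∈ ZSet p n F b,
        (1 / (n : ℝ)) * ∑ j, z' j * a j ≤ (1 / (n : ℝ)) * ∑ j, z j * a j) ∧
      (∀ σ' : Fin p → ℝ, (∀ i, 0 ≤ σ' i) →
        -(∑ i, b i * σ i) + (1 / (n : ℝ)) * ∑ j, |(∑ i, σ i * F i j) + a j| ≤
          -(∑ i, b i * σ' i) + (1 / (n : ℝ)) * ∑ j, |(∑ i, σ' i * F i j) + a j|) ∧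
      (1 / (n : ℝ)) * ∑ j, z j * a j =
        -(∑ i, b i * σ i) + (1 / (n : ℝ)) * ∑ j, |(∑ i, σ i * F i j) + a j| := by
  have hobj (z : Fin n → ℝ) : (1 / (n : ℝ)) * ∑ j, z j * a j = z ⬝ᵥ ((1 / (n : ℝ)) • a) := by
    rw [dotProduct_smul, smul_eq_mul]
    rfl
  have hdual (σ : Fin p → ℝ) :
      -(∑ i, b i * σ i) + (1 / (n : ℝ)) * ∑ j, |(∑ i, σ i * F i j) + a j| =
        boxDualObjective ((1 / (n : ℝ)) • F) b ((1 / (n : ℝ)) • a) σ :=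
    (boxDualObjective_smul (by positivity) F b a σ).symm
  rw [ZSet_eq_boxPolytope] at hZ ⊢
  simp only [hobj, hdual]
  obtain ⟨z, hz, σ, hσ, heq⟩ := exists_dotProduct_eq_boxDualObjective ((1 / (n : ℝ)) • a) hZ
  exact ⟨z, hz, σ, hσ, fun z' hz' => heq ▸ dotProduct_le_boxDualObjective hz' hσ,
    fun σ' hσ' => heq ▸ dotProduct_le_boxDualObjective hz hσ', heq⟩

theorem stmt_5 (p n : ℕ) (hp : 0 < p) (hn : 0 < n)
    (F : Fin p → Fin n → ℝ) (b : Fin p → ℝ) (a : Fin n → ℝ)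
    (hZ : (ZSet p n F b).Nonempty) :
    ∃ z ∈ ZSet p n F b, ∃ σ : Fin p → ℝ, (∀ i, 0 ≤ σ i) ∧
      (∀ z' ∈ ZSet p n F b,
        (1 / (n : ℝ)) * ∑ j, z' j * a j ≤ (1 / (n : ℝ)) * ∑ j, z j * a j) ∧
      (∀ σ' : Fin p → ℝ, (∀ i, 0 ≤ σ' i) →
        -(∑ i, b i * σ i) + (1 / (n : ℝ)) * ∑ j, |(∑ i, σ i * F i j) + a j| ≤
          -(∑ i, b i * σ' i) + (1 / (n : ℝ)) * ∑ j, |(∑ i, σ' i * F i j) + a j|) ∧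
      (1 / (n : ℝ)) * ∑ j, z j * a j =
        -(∑ i, b i * σ i) + (1 / (n : ℝ)) * ∑ j, |(∑ i, σ i * F i j) + a j| :=
  stmt_5_general p n F b a hZ
end

section
/- Lagrange duality with two-sided (L∞) constraints (Lemma A.4): for any a ∈ ℝⁿ, sup over z ∈ Z_ε of (1/n)·zᵀa equals inf over σ ∈ ℝᵖ of [−bᵀσ + (1/n)·‖Fᵀσ + a‖₁ + ε·‖σ‖₁], and both the supremum and the infimum are attained. -/
open scoped BigOperators

def ZeSet (p n : ℕ) (F : Fin p → Fin n → ℝ) (b : Fin p → ℝ) (ε : ℝ) : Set (Fin n → ℝ) :=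
  {z | (∀ j, z j ∈ Set.Icc (-1:ℝ) 1) ∧ ∀ i, |(1 / (n : ℝ)) * (∑ j, F i j * z j) - b i| ≤ ε}

/-!
With the Lagrangian `Λ(σ; z, τ) = zᵀa/n + σᵀ(Fz/n - b + ετ)` on the cube `(z, τ) ∈ [-1,1]ⁿ⁺ᵖ`,
the dual objective `g σ` is the maximum of `Λ(σ; ·)` over the cube, attained at sign vectors; so
`g` is the maximum of finitely many affine functions of `σ`, and `g ≥ zᵀa/n` on `Z_ε` (weak
duality) bounds it below. Such a function attains its minimum (Fourier–Motzkin elimination),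
and at a minimiser `σ₀` the point `(0, g σ₀)` is a convex combination of the affine pieces:
otherwise a functional separating `0` from the gradients of the active pieces is a descent
direction. The pieces depend affinely on `(z, τ)`, so this convex combination is the piece of
some `(z, τ)` in the cube with vanishing gradient `Fz/n - b + ετ`, i.e. `z ∈ Z_ε` with
`zᵀa/n = g σ₀`.
-/

open Finset Filter Topology Matrix

section MaxAffine

variable {ι : Type*} [Fintype ι]

/-- A pair `(c, d)` encodes the affine function `σ ↦ c ⬝ᵥ σ + d`. -/
def evalAffine (σ : ι → ℝ) : ((ι → ℝ) × ℝ) →ₗ[ℝ] ℝ where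
  toFun π := π.1 ⬝ᵥ σ + π.2
  map_add' π ρ := by simp only [Prod.fst_add, Prod.snd_add, add_dotProduct]; ring
  map_smul' c π := by
    simp only [Prod.smul_fst, Prod.smul_snd, smul_dotProduct, smul_eq_mul, RingHom.id_apply]; ring

lemma evalAffine_apply (σ : ι → ℝ) (π : (ι → ℝ) × ℝ) : evalAffine σ π = π.1 ⬝ᵥ σ + π.2 := rfl

noncomputable def maxAffine (S : Finset ((ι → ℝ) × ℝ)) (hS : S.Nonempty) (σ : ι → ℝ) : ℝ :=
  S.sup' hS fun π => evalAffine σ π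

theorem zero_maxAffine_mem_convexHull {S : Finset ((ι → ℝ) × ℝ)} {hS : S.Nonempty} {σ₀ : ι → ℝ}
    (hmin : ∀ σ, maxAffine S hS σ₀ ≤ maxAffine S hS σ) :
    ((0 : ι → ℝ), maxAffine S hS σ₀) ∈ convexHull ℝ (S : Set ((ι → ℝ) × ℝ)) := by
  classical
  set W := maxAffine S hS σ₀
  set A : Set ((ι → ℝ) × ℝ) := {π | π ∈ S ∧ evalAffine σ₀ π = W}
  have hAS : A ⊆ S := fun π hπ => hπ.1
  suffices h0 : (0 : ι → ℝ) ∈ convexHull ℝ (Prod.fst '' A) by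
    obtain ⟨κ, hκ, hκ0⟩ : (0 : ι → ℝ) ∈ LinearMap.fst ℝ (ι → ℝ) ℝ '' convexHull ℝ A := by
      rwa [LinearMap.image_convexHull]
    have hκW : evalAffine σ₀ κ = W :=
      convexHull_min (fun π hπ => hπ.2) (convex_hyperplane (evalAffine σ₀).isLinear W) hκ
    rw [LinearMap.fst_apply] at hκ0
    rw [evalAffine_apply, hκ0, zero_dotProduct, zero_add] at hκW
    exact convexHull_mono hAS ((Prod.ext hκ0 hκW : κ = (0, W)) ▸ hκ)
  by_contra h0
  obtain ⟨φ, u, hφ0, hφ⟩ := geometric_hahn_banach_point_closed (convex_convexHull ℝ _)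
    (((S.finite_toSet.subset hAS).image _).isCompact_convexHull ℝ).isClosed h0
  set y := (dotProductEquiv ℝ ι).symm (φ : (ι → ℝ) →ₗ[ℝ] ℝ)
  have hy : ∀ c, c ⬝ᵥ y = φ c := fun c => by
    rw [dotProduct_comm]
    exact LinearMap.congr_fun ((dotProductEquiv ℝ ι).apply_symm_apply _) c
  have hdesc : ∀ᶠ t in 𝓝[>] (0 : ℝ), ∀ π ∈ S, evalAffine (σ₀ - t • y) π < W := by
    rw [eventually_all_finset]
    intro π hπ
    have heval : ∀ t : ℝ, evalAffine (σ₀ - t • y) π = evalAffine σ₀ π - t * φ π.1 := fun t => by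
      rw [evalAffine_apply, evalAffine_apply, dotProduct_sub, dotProduct_smul, hy, smul_eq_mul]
      ring
    simp_rw [heval]
    by_cases hact : evalAffine σ₀ π = W
    · have hpos : 0 < φ π.1 :=
        (map_zero φ ▸ hφ0).trans (hφ _ (subset_convexHull ℝ _ ⟨π, ⟨hπ, hact⟩, rfl⟩))
      filter_upwards [self_mem_nhdsWithin] with t ht
      rw [hact]
      exact sub_lt_self W (mul_pos ht hpos)
    · have hlt : evalAffine σ₀ π < W :=
        lt_of_le_of_ne (le_sup' (fun π => evalAffine σ₀ π) hπ) hact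
      have hlim : Tendsto (fun t : ℝ => evalAffine σ₀ π - t * φ π.1) (𝓝 0)
          (𝓝 (evalAffine σ₀ π)) :=
        (continuous_const.sub (continuous_id.mul continuous_const)).tendsto' (0 : ℝ) _ (by simp)
      exact nhdsWithin_le_nhds (hlim.eventually (gt_mem_nhds hlt))
  obtain ⟨t, ht⟩ := hdesc.exists
  exact (hmin (σ₀ - t • y)).not_gt ((sup'_lt_iff hS).2 ht)

end MaxAffine

lemma exists_forall_mul_add_le {κ : Type*} (s : Finset κ) (α e : κ → ℝ) (M : ℝ)
    (hzero : ∀ i ∈ s, α i = 0 → e i ≤ M)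
    (hpair : ∀ i ∈ s, ∀ j ∈ s, 0 < α i → α j < 0 → -α j * e i + α i * e j ≤ (α i - α j) * M) :
    ∃ t, ∀ i ∈ s, α i * t + e i ≤ M := by
  classical
  set lower := {j ∈ s | α j < 0}.image fun j => (M - e j) / α j
  set upper := {i ∈ s | 0 < α i}.image fun i => (M - e i) / α i
  obtain ⟨t, hlower, hupper⟩ : ∃ t, (∀ x ∈ lower, x ≤ t) ∧ ∀ y ∈ upper, t ≤ y := by
    rcases lower.eq_empty_or_nonempty with h | h
    · obtain ⟨t, ht⟩ := upper.bddBelow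
      exact ⟨t, by simp [h], fun y hy => ht hy⟩
    refine ⟨lower.max' h, fun x hx => lower.le_max' x hx, fun y hy => lower.max'_le h _ ?_⟩
    simp only [lower, upper, mem_image, mem_filter] at hy ⊢
    obtain ⟨i, ⟨hi, hαi⟩, rfl⟩ := hy
    rintro _ ⟨j, ⟨hj, hαj⟩, rfl⟩
    rw [← neg_div_neg_eq, neg_sub, div_le_div_iff₀ (neg_pos.2 hαj) hαi]
    linarith [hpair i hi j hj hαi hαj]
  refine ⟨t, fun i hi => ?_⟩
  rcases lt_trichotomy (α i) 0 with h | h | h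
  · have := hlower _ (mem_image_of_mem _ (mem_filter.2 ⟨hi, h⟩))
    rw [div_le_iff_of_neg h] at this
    linarith
  · rw [h, zero_mul, zero_add]
    exact hzero i hi h
  · have := hupper _ (mem_image_of_mem _ (mem_filter.2 ⟨hi, h⟩))
    rw [le_div_iff₀ h] at this
    linarith

section FourierMotzkin

variable {P : ℕ}

def tailPiece (π : (Fin (P + 1) → ℝ) × ℝ) : (Fin P → ℝ) × ℝ := (Fin.tail π.1, π.2)

lemma evalAffine_cons (t : ℝ) (σ : Fin P → ℝ) (π : (Fin (P + 1) → ℝ) × ℝ) :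
    evalAffine (Fin.cons t σ) π = π.1 0 * t + evalAffine σ (tailPiece π) := by
  simp only [evalAffine_apply, dotProduct, Fin.sum_univ_succ, Fin.cons_zero, Fin.cons_succ,
    tailPiece, Fin.tail]
  ring

/-- Fourier–Motzkin elimination of the first coordinate. The combinations have weights summing
to `1`, so that a common upper bound `M` of the pieces is also one of the combinations. -/
noncomputable def fourierMotzkin (S : Finset ((Fin (P + 1) → ℝ) × ℝ)) :
    Finset ((Fin P → ℝ) × ℝ) :=
  {π ∈ S | π.1 0 = 0}.image tailPiece ∪
    ({π ∈ S | 0 < π.1 0} ×ˢ {ρ ∈ S | ρ.1 0 < 0}).image fun πρ =>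
      (πρ.1.1 0 - πρ.2.1 0)⁻¹ • ((-πρ.2.1 0) • tailPiece πρ.1 + πρ.1.1 0 • tailPiece πρ.2)

lemma exists_forall_evalAffine_cons_le_iff (S : Finset ((Fin (P + 1) → ℝ) × ℝ))
    (σ : Fin P → ℝ) (M : ℝ) :
    (∃ t, ∀ π ∈ S, evalAffine (Fin.cons t σ) π ≤ M) ↔
      ∀ π ∈ fourierMotzkin S, evalAffine σ π ≤ M := by
  classical
  simp only [fourierMotzkin, forall_mem_union, forall_mem_image, mem_product, mem_filter,
    map_smul, map_add, smul_eq_mul, evalAffine_cons]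
  constructor
  · rintro ⟨t, ht⟩
    refine ⟨fun π ⟨hπ, h0⟩ => by simpa [h0] using ht π hπ, ?_⟩
    rintro ⟨π, ρ⟩ ⟨⟨hπ, hαπ⟩, hρ, hαρ⟩
    rw [inv_mul_le_iff₀ (by linarith)]
    nlinarith [ht π hπ, ht ρ hρ]
  · rintro ⟨hzero, hpair⟩
    refine exists_forall_mul_add_le S (fun π => π.1 0) (fun π => evalAffine σ (tailPiece π)) M
      (fun π hπ h0 => hzero ⟨hπ, h0⟩) fun π hπ ρ hρ hαπ hαρ => ?_
    have := hpair (x := (π, ρ)) ⟨⟨hπ, hαπ⟩, hρ, hαρ⟩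
    rwa [inv_mul_le_iff₀ (by linarith)] at this

noncomputable def fourierMotzkinIter : {P : ℕ} → Finset ((Fin P → ℝ) × ℝ) → Finset ℝ
  | 0, S => S.image Prod.snd
  | _ + 1, S => fourierMotzkinIter (fourierMotzkin S)

lemma exists_forall_evalAffine_le_iff : ∀ {P : ℕ} (S : Finset ((Fin P → ℝ) × ℝ)) (M : ℝ),
    (∃ σ, ∀ π ∈ S, evalAffine σ π ≤ M) ↔ ∀ c ∈ fourierMotzkinIter S, c ≤ M
  | 0, S, M => by
    classical
    simp [fourierMotzkinIter, evalAffine_apply, dotProduct]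
  | _ + 1, S, M => by
    rw [fourierMotzkinIter, ← exists_forall_evalAffine_le_iff (fourierMotzkin S)]
    simp_rw [← exists_forall_evalAffine_cons_le_iff]
    exact ⟨fun ⟨σ, h⟩ => ⟨Fin.tail σ, σ 0, by rwa [Fin.cons_self_tail]⟩, fun ⟨_, t, h⟩ => ⟨_, h⟩⟩

theorem exists_forall_maxAffine_le (S : Finset ((Fin P → ℝ) × ℝ)) (hS : S.Nonempty)
    (hbdd : BddBelow (Set.range (maxAffine S hS))) :
    ∃ σ₀, ∀ σ, maxAffine S hS σ₀ ≤ maxAffine S hS σ := by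
  have key : ∀ M, (∃ σ, maxAffine S hS σ ≤ M) ↔ ∀ c ∈ fourierMotzkinIter S, c ≤ M := by
    simpa only [maxAffine, sup'_le_iff] using exists_forall_evalAffine_le_iff S
  obtain ⟨m, hm⟩ := hbdd
  have hne : (fourierMotzkinIter S).Nonempty := by
    by_contra h
    obtain ⟨σ, hσ⟩ := (key (m - 1)).2 (by simp [not_nonempty_iff_eq_empty.1 h])
    linarith [hm ⟨σ, rfl⟩]
  obtain ⟨σ₀, hσ₀⟩ := (key ((fourierMotzkinIter S).max' hne)).2 fun c hc =>
    (fourierMotzkinIter S).le_max' c hc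
  exact ⟨σ₀, fun σ => hσ₀.trans ((fourierMotzkinIter S).max'_le hne _ ((key _).1 ⟨σ, le_rfl⟩))⟩

end FourierMotzkin

lemma mul_le_abs_of_mem_Icc {s : ℝ} (hs : s ∈ Set.Icc (-1 : ℝ) 1) (x : ℝ) : s * x ≤ |x| :=
  (le_abs_self _).trans (by rw [abs_mul]; exact mul_le_of_le_one_left (abs_nonneg x) (abs_le.2 hs))

lemma ite_nonneg_mul_eq_abs (x : ℝ) : (if 0 ≤ x then 1 else -1) * x = |x| := by
  split_ifs with h
  · rw [one_mul, abs_of_nonneg h]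
  · rw [neg_one_mul, abs_of_neg (not_le.1 h)]

lemma exists_mem_Icc_add_mul_eq_zero {r ε : ℝ} (h : |r| ≤ ε) :
    ∃ τ ∈ Set.Icc (-1 : ℝ) 1, r + ε * τ = 0 := by
  rcases ((abs_nonneg r).trans h).eq_or_lt with hε | hε
  · obtain rfl := abs_nonpos_iff.1 (h.trans hε.ge)
    exact ⟨0, by norm_num, by ring⟩
  · refine ⟨-r / ε, abs_le.1 ?_, by field_simp; ring⟩
    rw [abs_div, abs_neg, abs_of_pos hε]
    exact (div_le_one hε).2 h

noncomputable def signVectors (m : ℕ) : Finset (Fin m → ℝ) := Fintype.piFinset fun _ => {-1, 1}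

lemma mem_Icc_of_mem_signVectors {m : ℕ} {s : Fin m → ℝ} (hs : s ∈ signVectors m) :
    s ∈ Set.Icc (-1) 1 := by
  have hs' : ∀ j, s j = -1 ∨ s j = 1 := by simpa [signVectors] using hs
  exact ⟨fun j => by rcases hs' j with h | h <;> norm_num [h],
    fun j => by rcases hs' j with h | h <;> norm_num [h]⟩

lemma coe_signVectors_product_subset_Icc (n p : ℕ) :
    ((signVectors n ×ˢ signVectors p : Finset _) : Set ((Fin n → ℝ) × (Fin p → ℝ))) ⊆
      Set.Icc (-1) 1 := by
  rintro ⟨z, τ⟩ h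
  obtain ⟨hz, hτ⟩ := mem_product.1 h
  exact ⟨⟨(mem_Icc_of_mem_signVectors hz).1, (mem_Icc_of_mem_signVectors hτ).1⟩,
    (mem_Icc_of_mem_signVectors hz).2, (mem_Icc_of_mem_signVectors hτ).2⟩

section LagrangeDuality

variable {p n : ℕ} (F : Fin p → Fin n → ℝ) (b : Fin p → ℝ) (a : Fin n → ℝ) (ε : ℝ)

noncomputable def dualObjective (σ : Fin p → ℝ) : ℝ :=
  -(∑ i, b i * σ i) + (1 / (n : ℝ)) * (∑ j, |(∑ i, σ i * F i j) + a j|) + ε * ∑ i, |σ i|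

/-- `(z, τ) ↦ (Fz/n - b + ετ, zᵀa/n)`, which encodes (see `evalAffine`) the Lagrangian
`σ ↦ zᵀa/n + σᵀ(Fz/n - b + ετ)`. -/
noncomputable def lagrangePiece : (Fin n → ℝ) × (Fin p → ℝ) →ᵃ[ℝ] (Fin p → ℝ) × ℝ where
  toFun x := (fun i => (1 / (n : ℝ)) * (∑ j, F i j * x.1 j) - b i + ε * x.2 i,
    (1 / (n : ℝ)) * ∑ j, x.1 j * a j)
  linear :=
    { toFun := fun x => (fun i => (1 / (n : ℝ)) * (∑ j, F i j * x.1 j) + ε * x.2 i,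
        (1 / (n : ℝ)) * ∑ j, x.1 j * a j)
      map_add' := fun x y => by
        ext i
        · simp only [Prod.fst_add, Prod.snd_add, Pi.add_apply, mul_add, sum_add_distrib]
          ring
        · simp only [Prod.fst_add, Pi.add_apply, add_mul, sum_add_distrib, mul_add, Prod.snd_add]
      map_smul' := fun c x => by
        ext <;> simp only [Prod.smul_fst, Prod.smul_snd, Pi.smul_apply, smul_eq_mul,
          RingHom.id_apply, mul_sum, mul_add, mul_assoc, mul_left_comm c] }
  map_vadd' x v := by
    ext i
    · simp only [vadd_eq_add, Prod.fst_add, Prod.snd_add, Pi.add_apply, LinearMap.coe_mk,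
        AddHom.coe_mk, mul_add, sum_add_distrib]
      ring
    · simp only [vadd_eq_add, Prod.fst_add, Pi.add_apply, LinearMap.coe_mk, AddHom.coe_mk,
        add_mul, sum_add_distrib, mul_add, Prod.snd_add]

lemma evalAffine_lagrangePiece (σ : Fin p → ℝ) (z : Fin n → ℝ) (τ : Fin p → ℝ) :
    evalAffine σ (lagrangePiece F b a ε (z, τ)) = -(∑ i, b i * σ i)
      + (1 / (n : ℝ)) * ∑ j, z j * ((∑ i, σ i * F i j) + a j) + ε * ∑ i, τ i * σ i := by
  simp only [evalAffine_apply, lagrangePiece, AffineMap.coe_mk, dotProduct, add_mul, sub_mul,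
    sum_add_distrib, sum_sub_distrib, mul_add, mul_sum, sum_mul]
  rw [sum_comm]
  simp only [mul_comm, mul_assoc, mul_left_comm]
  ring

lemma evalAffine_lagrangePiece_le_dualObjective (hε : 0 ≤ ε) {x : (Fin n → ℝ) × (Fin p → ℝ)}
    (hx : x ∈ Set.Icc (-1) 1) (σ : Fin p → ℝ) :
    evalAffine σ (lagrangePiece F b a ε x) ≤ dualObjective F b a ε σ := by
  obtain ⟨⟨hz₁, hτ₁⟩, hz₂, hτ₂⟩ := hx
  rw [← Prod.mk.eta (p := x), evalAffine_lagrangePiece, dualObjective]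
  gcongr with j _ i _
  · exact mul_le_abs_of_mem_Icc ⟨hz₁ j, hz₂ j⟩ _
  · exact mul_le_abs_of_mem_Icc ⟨hτ₁ i, hτ₂ i⟩ _

noncomputable def dualPieces : Finset ((Fin p → ℝ) × ℝ) :=
  (signVectors n ×ˢ signVectors p).image (lagrangePiece F b a ε)

lemma dualPieces_nonempty : (dualPieces F b a ε).Nonempty :=
  ((Fintype.piFinset_nonempty.2 fun _ => insert_nonempty _ _).product
    (Fintype.piFinset_nonempty.2 fun _ => insert_nonempty _ _)).image _

lemma dualObjective_eq_maxAffine (hε : 0 ≤ ε) (σ : Fin p → ℝ) :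
    dualObjective F b a ε σ = maxAffine (dualPieces F b a ε) (dualPieces_nonempty F b a ε) σ := by
  refine le_antisymm ?_ (sup'_le _ _ ?_)
  · set z : Fin n → ℝ := fun j => if 0 ≤ (∑ i, σ i * F i j) + a j then 1 else -1
    set τ : Fin p → ℝ := fun i => if 0 ≤ σ i then 1 else -1
    have hmem : lagrangePiece F b a ε (z, τ) ∈ dualPieces F b a ε :=
      mem_image_of_mem _ (mem_product.2
        ⟨Fintype.mem_piFinset.2 fun j => by
            by_cases h : 0 ≤ (∑ i, σ i * F i j) + a j <;> simp [z, h],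
          Fintype.mem_piFinset.2 fun i => by by_cases h : 0 ≤ σ i <;> simp [τ, h]⟩)
    refine le_of_eq_of_le ?_ (le_sup' (fun π => evalAffine σ π) hmem)
    simp only [evalAffine_lagrangePiece, dualObjective, z, τ, ite_nonneg_mul_eq_abs]
  · intro π hπ
    obtain ⟨x, hx, rfl⟩ := mem_image.1 hπ
    exact evalAffine_lagrangePiece_le_dualObjective F b a ε hε
      (coe_signVectors_product_subset_Icc n p hx) σ

lemma mem_zeSet_of_lagrangePiece_fst_eq_zero (hε : 0 ≤ ε) {x : (Fin n → ℝ) × (Fin p → ℝ)}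
    (hx : x ∈ Set.Icc (-1) 1) (h0 : (lagrangePiece F b a ε x).1 = 0) :
    x.1 ∈ ZeSet p n F b ε := by
  obtain ⟨⟨hz₁, hτ₁⟩, hz₂, hτ₂⟩ := hx
  refine ⟨fun j => ⟨hz₁ j, hz₂ j⟩, fun i => ?_⟩
  have hi : (1 / (n : ℝ)) * (∑ j, F i j * x.1 j) - b i = -(ε * x.2 i) := by
    have := congrFun h0 i
    simp only [lagrangePiece, AffineMap.coe_mk, Pi.zero_apply] at this
    linarith
  rw [hi, abs_neg, abs_mul, abs_of_nonneg hε]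
  exact mul_le_of_le_one_right hε (abs_le.2 ⟨hτ₁ i, hτ₂ i⟩)

lemma exists_lagrangePiece_fst_eq_zero {z : Fin n → ℝ} (hz : z ∈ ZeSet p n F b ε) :
    ∃ τ ∈ Set.Icc (-1 : Fin p → ℝ) 1, (lagrangePiece F b a ε (z, τ)).1 = 0 := by
  choose τ hτ hτ0 using fun i => exists_mem_Icc_add_mul_eq_zero (hz.2 i)
  exact ⟨τ, ⟨fun i => (hτ i).1, fun i => (hτ i).2⟩, funext hτ0⟩

lemma objective_le_dualObjective (hε : 0 ≤ ε) {z : Fin n → ℝ} (hz : z ∈ ZeSet p n F b ε)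
    (σ : Fin p → ℝ) : (1 / (n : ℝ)) * ∑ j, z j * a j ≤ dualObjective F b a ε σ := by
  obtain ⟨τ, hτ, h0⟩ := exists_lagrangePiece_fst_eq_zero F b a ε hz
  have := evalAffine_lagrangePiece_le_dualObjective F b a ε hε
    (x := (z, τ)) ⟨⟨fun j => (hz.1 j).1, hτ.1⟩, fun j => (hz.1 j).2, hτ.2⟩ σ
  rwa [evalAffine_apply, h0, zero_dotProduct, zero_add] at this

end LagrangeDuality

theorem stmt_6_general (p n : ℕ)
    (F : Fin p → Fin n → ℝ) (b : Fin p → ℝ) (a : Fin n → ℝ) (ε : ℝ) (hε : 0 ≤ ε)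
    (hZ : (ZeSet p n F b ε).Nonempty) :
    ∃ z ∈ ZeSet p n F b ε, ∃ σ : Fin p → ℝ,
      (∀ z' ∈ ZeSet p n F b ε,
        (1 / (n : ℝ)) * ∑ j, z' j * a j ≤ (1 / (n : ℝ)) * ∑ j, z j * a j) ∧
      (∀ σ' : Fin p → ℝ,
        -(∑ i, b i * σ i) + (1 / (n : ℝ)) * (∑ j, |(∑ i, σ i * F i j) + a j|) + ε * ∑ i, |σ i| ≤
          -(∑ i, b i * σ' i) + (1 / (n : ℝ)) * (∑ j, |(∑ i, σ' i * F i j) + a j|) + ε * ∑ i, |σ' i|) ∧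
      (1 / (n : ℝ)) * ∑ j, z j * a j =
        -(∑ i, b i * σ i) + (1 / (n : ℝ)) * (∑ j, |(∑ i, σ i * F i j) + a j|) + ε * ∑ i, |σ i| := by
  obtain ⟨z₀, hz₀⟩ := hZ
  have hg := dualObjective_eq_maxAffine F b a ε hε
  obtain ⟨σ₀, hσ₀⟩ := exists_forall_maxAffine_le _ (dualPieces_nonempty F b a ε)
    ⟨_, Set.forall_mem_range.2 fun σ => hg σ ▸ objective_le_dualObjective F b a ε hε hz₀ σ⟩
  obtain ⟨x, hx, hxW⟩ : ((0 : Fin p → ℝ), maxAffine _ _ σ₀) ∈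
      lagrangePiece F b a ε '' convexHull ℝ ↑(signVectors n ×ˢ signVectors p) := by
    rw [AffineMap.image_convexHull, ← coe_image]
    exact zero_maxAffine_mem_convexHull hσ₀
  have hxIcc : x ∈ Set.Icc (-1) 1 :=
    convexHull_min (coe_signVectors_product_subset_Icc n p) (convex_Icc _ _) hx
  have hval : (1 / (n : ℝ)) * ∑ j, x.1 j * a j = dualObjective F b a ε σ₀ :=
    (congrArg Prod.snd hxW).trans (hg σ₀).symm
  refine ⟨x.1, mem_zeSet_of_lagrangePiece_fst_eq_zero F b a ε hε hxIcc (congrArg Prod.fst hxW),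
    σ₀, fun z hz => hval ▸ objective_le_dualObjective F b a ε hε hz σ₀,
    fun σ => (hg σ₀).trans_le ((hσ₀ σ).trans_eq (hg σ).symm), hval⟩

theorem stmt_6 (p n : ℕ) (hp : 0 < p) (hn : 0 < n)
    (F : Fin p → Fin n → ℝ) (b : Fin p → ℝ) (a : Fin n → ℝ) (ε : ℝ) (hε : 0 ≤ ε)
    (hZ : (ZeSet p n F b ε).Nonempty) :
    ∃ z ∈ ZeSet p n F b ε, ∃ σ : Fin p → ℝ,
      (∀ z' ∈ ZeSet p n F b ε,
        (1 / (n : ℝ)) * ∑ j, z' j * a j ≤ (1 / (n : ℝ)) * ∑ j, z j * a j) ∧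
      (∀ σ' : Fin p → ℝ,
        -(∑ i, b i * σ i) + (1 / (n : ℝ)) * (∑ j, |(∑ i, σ i * F i j) + a j|) + ε * ∑ i, |σ i| ≤
          -(∑ i, b i * σ' i) + (1 / (n : ℝ)) * (∑ j, |(∑ i, σ' i * F i j) + a j|) + ε * ∑ i, |σ' i|) ∧
      (1 / (n : ℝ)) * ∑ j, z j * a j =
        -(∑ i, b i * σ i) + (1 / (n : ℝ)) * (∑ j, |(∑ i, σ i * F i j) + a j|) + ε * ∑ i, |σ i| :=
  stmt_6_general p n F b a ε hε hZ
end

section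
/- Minimax optimal strategy (Theorem 2.2, strategy part): if σ* ∈ ℝᵖ with σ* ≥ 0 attains the minimum of the slack function γ over {σ ≥ 0}, then the prediction vector g(σ*) is a minimax optimal strategy: sup over z ∈ Z of ℓ(z, g(σ*)) = (1/2)·γ(σ*) = V, where V = min over g ∈ [−1,1]ⁿ of sup over z ∈ Z of ℓ(z,g). -/
/-!
Upper bound (weak duality): at `m = x_jᵀσ*` the prediction `g_j(σ*)` loses at most
`(Ψ(m) - z_j m) / 2` against any label `z_j ∈ [-1, 1]`, and feasibility of `z` together with
`σ* ≥ 0` gives `(1/n) Σ_j z_j x_jᵀσ* ≥ bᵀσ*`; summing, every `z ∈ Z` loses at most `γ(σ*)/2`.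

Lower bound (strong duality): `Ψ(m) ≤ ℓ₊(g) + ℓ₋(g) + |m - Γ(g)|` for every `g`, so minimality
of `σ*` bounds from below, for every `τ ≥ 0`, the Lagrangian dual of the linear program
`max {-(1/n) Σ_j z_j Γ(g_j) : z ∈ Z}`. Separating the (compact, convex) image of the cube
from the nonnegative orthant yields a multiplier that turns this into a feasible `z` against
which `g` loses at least `γ(σ*)/2`. Hence `g(σ*)` attains the minimax value.
-/

open scoped BigOperators

noncomputable def lossV (lp lm : ℝ → ℝ) (n : ℕ) (z g : Fin n → ℝ) : ℝ :=
  (1 / (n : ℝ)) * ∑ j, ((1 + z j) / 2 * lp (g j) + (1 - z j) / 2 * lm (g j))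

noncomputable def slack (lp lm Γinv : ℝ → ℝ) (p n : ℕ) (F : Fin p → Fin n → ℝ)
    (b : Fin p → ℝ) (σ : Fin p → ℝ) : ℝ :=
  -(∑ i, b i * σ i) + (1 / (n : ℝ)) * ∑ j, Psi lp lm Γinv (∑ i, σ i * F i j)

noncomputable def gpred (lp lm Γinv : ℝ → ℝ) (p n : ℕ) (F : Fin p → Fin n → ℝ)
    (σ : Fin p → ℝ) (j : Fin n) : ℝ :=
  if (∑ i, σ i * F i j) ≤ lm (-1) - lp (-1) then -1
  else if (∑ i, σ i * F i j) < lm 1 - lp 1 then Γinv (∑ i, σ i * F i j)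
  else 1

theorem exists_nonneg_sum_mul_neg_of_disjoint_nonneg {ι : Type*} [Fintype ι]
    {A : Set (ι → ℝ)} (hconv : Convex ℝ A) (hcomp : IsCompact A) (hA : ∀ a ∈ A, ¬0 ≤ a) :
    ∃ w : ι → ℝ, 0 ≤ w ∧ ∀ a ∈ A, ∑ i, w i * a i < 0 := by
  classical
  obtain ⟨f, u, v, hfu, huv, hfv⟩ := geometric_hahn_banach_compact_closed hconv hcomp
    (convex_Ici 0) isClosed_Ici (Set.disjoint_left.2 hA)
  have hv : v < 0 := by simpa using hfv 0 (Set.mem_Ici.2 le_rfl)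
  -- `f` is bounded below on the cone `Ici 0`, hence nonnegative on it
  have hf : ∀ x, 0 ≤ x → 0 ≤ f x := by
    intro x hx
    by_contra! hfx
    have := hfv ((v / f x) • x) (smul_nonneg (div_nonneg_of_nonpos hv.le hfx.le) hx)
    rw [map_smul, smul_eq_mul, div_mul_cancel₀ _ hfx.ne] at this
    exact lt_irrefl _ this
  refine ⟨fun i => f fun j => if i = j then 1 else 0,
    fun i => hf _ fun j => by dsimp only; split_ifs <;> norm_num, fun a ha => ?_⟩
  have hfa : f a = ∑ i, a i * f fun j => if i = j then 1 else 0 :=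
    f.toLinearMap.pi_apply_eq_sum_univ a
  simp_rw [mul_comm _ (a _), ← hfa]
  linarith [hfu a ha]

theorem exists_lagrange_multiplier {ι : Type*} [Fintype ι] {A : Set (Option ι → ℝ)}
    (hconv : Convex ℝ A) (hcomp : IsCompact A) (hA : ∀ a ∈ A, ¬0 ≤ a)
    {a₀ : Option ι → ℝ} (ha₀ : a₀ ∈ A) (ha₀_nonneg : ∀ i, 0 ≤ a₀ (some i)) :
    ∃ τ : ι → ℝ, 0 ≤ τ ∧ ∀ a ∈ A, a none + ∑ i, τ i * a (some i) < 0 := by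
  obtain ⟨w, hw, hwA⟩ := exists_nonneg_sum_mul_neg_of_disjoint_nonneg hconv hcomp hA
  have hs : 0 < w none := by
    by_contra! hs
    have := hwA a₀ ha₀
    rw [Fintype.sum_option, le_antisymm hs (hw none), zero_mul, zero_add] at this
    exact this.not_ge (Finset.sum_nonneg fun i _ => mul_nonneg (hw _) (ha₀_nonneg i))
  refine ⟨fun i => w (some i) / w none, fun i => div_nonneg (hw _) hs.le, fun a ha => ?_⟩
  have hscale : w none * (a none + ∑ i, w (some i) / w none * a (some i))
      = ∑ o, w o * a o := by
    rw [Fintype.sum_option, mul_add, Finset.mul_sum]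
    congr 1
    refine Finset.sum_congr rfl fun i _ => ?_
    field_simp
  exact neg_of_mul_neg_right (hscale ▸ hwA a ha) hs.le

section LinearProgram

variable {p n : ℕ} {F : Fin p → Fin n → ℝ} {b : Fin p → ℝ}

theorem sum_mul_constraint_eq (σ : Fin p → ℝ) (z : Fin n → ℝ) :
    ∑ i, σ i * ((1 / (n : ℝ)) * ∑ j, F i j * z j - b i)
      = (1 / (n : ℝ)) * ∑ j, z j * ∑ i, σ i * F i j - ∑ i, b i * σ i := by
  simp only [mul_sub, Finset.sum_sub_distrib, Finset.mul_sum]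
  rw [Finset.sum_comm]
  congr 1 <;> refine Finset.sum_congr rfl fun _ _ => ?_
  · exact Finset.sum_congr rfl fun _ _ => by ring
  · ring

theorem sum_mul_le_of_mem_ZSet {σ : Fin p → ℝ} (hσ : ∀ i, 0 ≤ σ i) {z : Fin n → ℝ}
    (hz : z ∈ ZSet p n F b) :
    ∑ i, b i * σ i ≤ (1 / (n : ℝ)) * ∑ j, z j * ∑ i, σ i * F i j := by
  rw [← sub_nonneg, ← sum_mul_constraint_eq]
  exact Finset.sum_nonneg fun i _ => mul_nonneg (hσ i) (sub_nonneg.2 (hz.2 i))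

theorem exists_mem_ZSet_le_of_forall_le (hZ : (ZSet p n F b).Nonempty) (c : Fin n → ℝ) (W : ℝ)
    (h : ∀ τ : Fin p → ℝ, (∀ i, 0 ≤ τ i) →
      W ≤ -(∑ i, b i * τ i) + (1 / (n : ℝ)) * ∑ j, |∑ i, τ i * F i j - c j|) :
    ∃ z ∈ ZSet p n F b, W ≤ -((1 / (n : ℝ)) * ∑ j, z j * c j) := by
  by_contra! hlt
  obtain ⟨z₀, hz₀⟩ := hZ
  let K : Set (Fin n → ℝ) := Set.univ.pi fun _ => Set.Icc (-1) 1
  let M : Matrix (Option (Fin p)) (Fin n) ℝ :=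
    fun o j => o.elim (-(c j / n)) fun i => F i j / n
  let d : Option (Fin p) → ℝ := fun o => o.elim (-W) fun i => -b i
  let φ : (Fin n → ℝ) →ᵃ[ℝ] (Option (Fin p) → ℝ) :=
    M.mulVecLin.toAffineMap + AffineMap.const ℝ _ d
  have hφ_none : ∀ z, φ z none = -((1 / (n : ℝ)) * ∑ j, z j * c j) - W := fun z => by
    change ∑ j, -(c j / n) * z j + -W = _
    rw [Finset.mul_sum, ← Finset.sum_neg_distrib, sub_eq_add_neg]
    exact congrArg (· + -W) (Finset.sum_congr rfl fun _ _ => by ring)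
  have hφ_some : ∀ z i, φ z (some i) = (1 / (n : ℝ)) * ∑ j, F i j * z j - b i := fun z i => by
    change ∑ j, F i j / n * z j + -b i = _
    rw [Finset.mul_sum, sub_eq_add_neg]
    exact congrArg (· + -b i) (Finset.sum_congr rfl fun _ _ => by ring)
  have hK : Convex ℝ K ∧ IsCompact K :=
    ⟨convex_pi fun _ _ => convex_Icc _ _, isCompact_univ_pi fun _ => isCompact_Icc⟩
  have hz₀K : z₀ ∈ K := fun j _ => hz₀.1 j
  have hdisj : ∀ a ∈ φ '' K, ¬0 ≤ a := by
    rintro _ ⟨z, hzK, rfl⟩ hnn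
    have hzZ : z ∈ ZSet p n F b :=
      ⟨fun j => hzK j (Set.mem_univ j), fun i => by simpa [hφ_some] using hnn (some i)⟩
    have h0 : (0 : ℝ) ≤ φ z none := hnn none
    rw [hφ_none] at h0
    linarith [hlt z hzZ]
  obtain ⟨τ, hτ, hτK⟩ := exists_lagrange_multiplier (hK.1.affine_image φ)
    (hK.2.image φ.continuous_of_finiteDimensional) hdisj ⟨z₀, hz₀K, rfl⟩
    fun i => by rw [hφ_some]; exact sub_nonneg.2 (hz₀.2 i)
  -- the dual bound at `τ` is attained at the sign vector of `Fᵀτ - c`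
  let ζ : Fin n → ℝ := fun j => if 0 ≤ ∑ i, τ i * F i j - c j then 1 else -1
  have hζK : ζ ∈ K := fun j _ => by
    simp only [ζ]; split_ifs <;> norm_num
  have hζ : ∑ j, ζ j * (∑ i, τ i * F i j - c j) = ∑ j, |∑ i, τ i * F i j - c j| := by
    refine Finset.sum_congr rfl fun j _ => ?_
    simp only [ζ]
    split_ifs with hj
    · rw [abs_of_nonneg hj, one_mul]
    · rw [abs_of_neg (not_le.1 hj), neg_one_mul]
  have hlag := hτK _ ⟨ζ, hζK, rfl⟩
  simp only [hφ_none, hφ_some, sum_mul_constraint_eq] at hlag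
  have hdual := h τ hτ
  simp only [mul_sub, Finset.sum_sub_distrib] at hζ
  rw [← hζ, mul_sub] at hdual
  linarith

end LinearProgram

section Loss

variable {lp lm Γinv : ℝ → ℝ}

noncomputable def clippedInv (lp lm Γinv : ℝ → ℝ) (m : ℝ) : ℝ :=
  if m ≤ lm (-1) - lp (-1) then -1 else if m < lm 1 - lp 1 then Γinv m else 1

theorem gpred_eq_clippedInv (p n : ℕ) (F : Fin p → Fin n → ℝ) (σ : Fin p → ℝ) (j : Fin n) :
    gpred lp lm Γinv p n F σ j = clippedInv lp lm Γinv (∑ i, σ i * F i j) :=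
  rfl

theorem clippedInv_mem_Icc
    (hGinvMem : ∀ m ∈ Set.Icc (lm (-1) - lp (-1)) (lm 1 - lp 1), Γinv m ∈ Set.Icc (-1:ℝ) 1)
    (m : ℝ) : clippedInv lp lm Γinv m ∈ Set.Icc (-1 : ℝ) 1 := by
  unfold clippedInv
  split_ifs with h₁ h₂
  · norm_num
  · exact hGinvMem m ⟨(not_le.1 h₁).le, h₂.le⟩
  · norm_num

theorem Psi_le_add_abs (hlpm : AntitoneOn lp (Set.Icc (-1) 1))
    (hlmm : MonotoneOn lm (Set.Icc (-1) 1))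
    (hGinvMem : ∀ m ∈ Set.Icc (lm (-1) - lp (-1)) (lm 1 - lp 1), Γinv m ∈ Set.Icc (-1:ℝ) 1)
    (hGinvRight : ∀ m ∈ Set.Icc (lm (-1) - lp (-1)) (lm 1 - lp 1), lm (Γinv m) - lp (Γinv m) = m)
    {g : ℝ} (hg : g ∈ Set.Icc (-1 : ℝ) 1) (m : ℝ) :
    Psi lp lm Γinv m ≤ lp g + lm g + |m - (lm g - lp g)| := by
  have hm : 2 * lm g - m ≤ lp g + lm g + |m - (lm g - lp g)| := by
    linarith [neg_abs_le (m - (lm g - lp g))]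
  have hp : 2 * lp g + m ≤ lp g + lm g + |m - (lm g - lp g)| := by
    linarith [le_abs_self (m - (lm g - lp g))]
  have hneg : (-1 : ℝ) ∈ Set.Icc (-1 : ℝ) 1 := by norm_num
  have hpos : (1 : ℝ) ∈ Set.Icc (-1 : ℝ) 1 := by norm_num
  unfold Psi
  split_ifs with h₁ h₂
  · linarith [hlmm hneg hg hg.1]
  · have hmem : m ∈ Set.Icc (lm (-1) - lp (-1)) (lm 1 - lp 1) := ⟨(not_le.1 h₁).le, h₂.le⟩
    have hG := hGinvMem m hmem
    have hΓ := hGinvRight m hmem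
    rcases le_total g (Γinv m) with hgG | hGg
    · linarith [hlpm hg hG hgG]
    · linarith [hlmm hG hg hGg]
  · linarith [hlpm hg hpos hg.2]

theorem loss_clippedInv_le
    (hGinvRight : ∀ m ∈ Set.Icc (lm (-1) - lp (-1)) (lm 1 - lp 1), lm (Γinv m) - lp (Γinv m) = m)
    {z : ℝ} (hz : z ∈ Set.Icc (-1 : ℝ) 1) (m : ℝ) :
    (1 + z) / 2 * lp (clippedInv lp lm Γinv m) + (1 - z) / 2 * lm (clippedInv lp lm Γinv m)
      ≤ (Psi lp lm Γinv m - z * m) / 2 := by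
  obtain ⟨hz₁, hz₂⟩ := hz
  unfold clippedInv Psi
  split_ifs with h₁ h₂
  · nlinarith [mul_nonneg (by linarith : (0:ℝ) ≤ 1 + z) (by linarith : 0 ≤ lm (-1) - lp (-1) - m)]
  · have hΓ := hGinvRight m ⟨(not_le.1 h₁).le, h₂.le⟩
    linear_combination (-z / 2) * hΓ
  · nlinarith [mul_nonneg (by linarith : (0:ℝ) ≤ 1 - z) (by linarith : 0 ≤ m - (lm 1 - lp 1))]

theorem lossV_eq (n : ℕ) (z g : Fin n → ℝ) :
    lossV lp lm n z g = ((1 / (n : ℝ)) * ∑ j, (lp (g j) + lm (g j))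
      - (1 / (n : ℝ)) * ∑ j, z j * (lm (g j) - lp (g j))) / 2 := by
  have hterm : ∀ j, (1 + z j) / 2 * lp (g j) + (1 - z j) / 2 * lm (g j)
      = ((lp (g j) + lm (g j)) - z j * (lm (g j) - lp (g j))) / 2 := fun j => by ring
  simp only [lossV, hterm, ← Finset.sum_div, Finset.sum_sub_distrib]
  ring

theorem bddAbove_lossV_ZSet (p n : ℕ) (F : Fin p → Fin n → ℝ) (b : Fin p → ℝ) (g : Fin n → ℝ) :
    BddAbove {w | ∃ z ∈ ZSet p n F b, w = lossV lp lm n z g} := by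
  have hcube : IsCompact (Set.univ.pi fun _ : Fin n => Set.Icc (-1 : ℝ) 1) :=
    isCompact_univ_pi fun _ => isCompact_Icc
  obtain ⟨C, hC⟩ := hcube.bddAbove_image (f := fun z => lossV lp lm n z g)
    (by unfold lossV; fun_prop)
  exact ⟨C, by rintro _ ⟨z, hz, rfl⟩; exact hC ⟨z, fun j _ => hz.1 j, rfl⟩⟩

end Loss

section Minimax

variable {p n : ℕ} {F : Fin p → Fin n → ℝ} {b : Fin p → ℝ} {lp lm Γinv : ℝ → ℝ}

theorem lossV_gpred_le_slack
    (hGinvRight : ∀ m ∈ Set.Icc (lm (-1) - lp (-1)) (lm 1 - lp 1), lm (Γinv m) - lp (Γinv m) = m)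
    {σ : Fin p → ℝ} (hσ : ∀ i, 0 ≤ σ i) {z : Fin n → ℝ} (hz : z ∈ ZSet p n F b) :
    lossV lp lm n z (gpred lp lm Γinv p n F σ) ≤ (1 / 2) * slack lp lm Γinv p n F b σ := by
  set m : Fin n → ℝ := fun j => ∑ i, σ i * F i j
  have hfeas := sum_mul_le_of_mem_ZSet hσ hz
  calc lossV lp lm n z (gpred lp lm Γinv p n F σ)
      ≤ (1 / (n : ℝ)) * ∑ j, (Psi lp lm Γinv (m j) - z j * m j) / 2 :=
        mul_le_mul_of_nonneg_left (Finset.sum_le_sum fun j _ => by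
          rw [gpred_eq_clippedInv]; exact loss_clippedInv_le hGinvRight (hz.1 j) (m j))
          (by positivity)
    _ = ((1 / (n : ℝ)) * ∑ j, Psi lp lm Γinv (m j)
          - (1 / (n : ℝ)) * ∑ j, z j * m j) / 2 := by
        rw [← Finset.sum_div, Finset.sum_sub_distrib]; ring
    _ ≤ (1 / 2) * slack lp lm Γinv p n F b σ := by
        unfold slack; linarith

theorem exists_mem_ZSet_half_le_lossV (hlpm : AntitoneOn lp (Set.Icc (-1) 1))
    (hlmm : MonotoneOn lm (Set.Icc (-1) 1))
    (hGinvMem : ∀ m ∈ Set.Icc (lm (-1) - lp (-1)) (lm 1 - lp 1), Γinv m ∈ Set.Icc (-1:ℝ) 1)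
    (hGinvRight : ∀ m ∈ Set.Icc (lm (-1) - lp (-1)) (lm 1 - lp 1), lm (Γinv m) - lp (Γinv m) = m)
    (hZ : (ZSet p n F b).Nonempty) {V : ℝ}
    (hV : ∀ τ : Fin p → ℝ, (∀ i, 0 ≤ τ i) → V ≤ slack lp lm Γinv p n F b τ)
    {g : Fin n → ℝ} (hg : ∀ j, g j ∈ Set.Icc (-1 : ℝ) 1) :
    ∃ z ∈ ZSet p n F b, (1 / 2) * V ≤ lossV lp lm n z g := by
  set base := (1 / (n : ℝ)) * ∑ j, (lp (g j) + lm (g j))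
  have hdual : ∀ τ : Fin p → ℝ, (∀ i, 0 ≤ τ i) → V - base ≤ -(∑ i, b i * τ i)
      + (1 / (n : ℝ)) * ∑ j, |∑ i, τ i * F i j - (lm (g j) - lp (g j))| := by
    intro τ hτ
    have hPsi : ∑ j, Psi lp lm Γinv (∑ i, τ i * F i j)
        ≤ ∑ j, (lp (g j) + lm (g j)) + ∑ j, |∑ i, τ i * F i j - (lm (g j) - lp (g j))| := by
      rw [← Finset.sum_add_distrib]
      exact Finset.sum_le_sum fun j _ => Psi_le_add_abs hlpm hlmm hGinvMem hGinvRight (hg j) _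
    have hscaled := mul_le_mul_of_nonneg_left hPsi (by positivity : (0 : ℝ) ≤ 1 / n)
    have hVτ := hV τ hτ
    rw [mul_add] at hscaled
    unfold slack at hVτ
    linarith
  obtain ⟨z, hz, hzW⟩ := exists_mem_ZSet_le_of_forall_le hZ _ _ hdual
  exact ⟨z, hz, by rw [lossV_eq]; linarith⟩

end Minimax

theorem stmt_8_general (p n : ℕ)
    (F : Fin p → Fin n → ℝ) (b : Fin p → ℝ)
    (lp lm Γinv : ℝ → ℝ)
    (hlpm : AntitoneOn lp (Set.Icc (-1) 1))
    (hlmm : MonotoneOn lm (Set.Icc (-1) 1))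
    (hGinvMem : ∀ m ∈ Set.Icc (lm (-1) - lp (-1)) (lm 1 - lp 1), Γinv m ∈ Set.Icc (-1:ℝ) 1)
    (hGinvRight : ∀ m ∈ Set.Icc (lm (-1) - lp (-1)) (lm 1 - lp 1), lm (Γinv m) - lp (Γinv m) = m)
    (hZ : (ZSet p n F b).Nonempty)
    (σs : Fin p → ℝ) (hσs : ∀ i, 0 ≤ σs i)
    (hmin : ∀ σ : Fin p → ℝ, (∀ i, 0 ≤ σ i) →
      slack lp lm Γinv p n F b σs ≤ slack lp lm Γinv p n F b σ) :
    sSup {w : ℝ | ∃ z ∈ ZSet p n F b, w = lossV lp lm n z (gpred lp lm Γinv p n F σs)} =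
      (1 / 2) * slack lp lm Γinv p n F b σs ∧
    (1 / 2) * slack lp lm Γinv p n F b σs =
      sInf {v : ℝ | ∃ g : Fin n → ℝ, (∀ j, g j ∈ Set.Icc (-1:ℝ) 1) ∧
        v = sSup {w : ℝ | ∃ z ∈ ZSet p n F b, w = lossV lp lm n z g}} := by
  have hlower : ∀ g : Fin n → ℝ, (∀ j, g j ∈ Set.Icc (-1 : ℝ) 1) →
      ∃ z ∈ ZSet p n F b, (1 / 2) * slack lp lm Γinv p n F b σs ≤ lossV lp lm n z g :=
    fun _ hg => exists_mem_ZSet_half_le_lossV hlpm hlmm hGinvMem hGinvRight hZ hmin hg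
  have hg : ∀ j, gpred lp lm Γinv p n F σs j ∈ Set.Icc (-1 : ℝ) 1 := fun j => by
    rw [gpred_eq_clippedInv]; exact clippedInv_mem_Icc hGinvMem _
  have hSup : sSup {w : ℝ | ∃ z ∈ ZSet p n F b,
      w = lossV lp lm n z (gpred lp lm Γinv p n F σs)} = (1 / 2) * slack lp lm Γinv p n F b σs := by
    obtain ⟨z, hz, hle⟩ := hlower _ hg
    have hupper := fun z (hz : z ∈ ZSet p n F b) => lossV_gpred_le_slack hGinvRight hσs hz
    refine IsGreatest.csSup_eq ⟨⟨z, hz, le_antisymm hle (hupper z hz)⟩, ?_⟩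
    rintro _ ⟨z', hz', rfl⟩
    exact hupper z' hz'
  refine ⟨hSup, Eq.symm (IsLeast.csInf_eq ⟨⟨_, hg, hSup.symm⟩, ?_⟩)⟩
  rintro _ ⟨g, hg, rfl⟩
  obtain ⟨z, hz, hle⟩ := hlower _ hg
  exact hle.trans (le_csSup (bddAbove_lossV_ZSet p n F b g) ⟨z, hz, rfl⟩)

theorem stmt_8 (p n : ℕ) (hp : 0 < p) (hn : 0 < n)
    (F : Fin p → Fin n → ℝ) (hF : ∀ i j, F i j ∈ Set.Icc (-1:ℝ) 1) (b : Fin p → ℝ)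
    (lp lm lp' lm' lp'' lm'' Γinv : ℝ → ℝ)
    (hlpc : ContinuousOn lp (Set.Icc (-1) 1))
    (hlmc : ContinuousOn lm (Set.Icc (-1) 1))
    (hlpd : ∀ x ∈ Set.Ioo (-1:ℝ) 1, HasDerivAt lp (lp' x) x)
    (hlmd : ∀ x ∈ Set.Ioo (-1:ℝ) 1, HasDerivAt lm (lm' x) x)
    (hlpd2 : ∀ x ∈ Set.Ioo (-1:ℝ) 1, HasDerivAt lp' (lp'' x) x)
    (hlmd2 : ∀ x ∈ Set.Ioo (-1:ℝ) 1, HasDerivAt lm' (lm'' x) x)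
    (hlpm : AntitoneOn lp (Set.Icc (-1) 1))
    (hlmm : MonotoneOn lm (Set.Icc (-1) 1))
    (hslope : ∀ x ∈ Set.Ioo (-1:ℝ) 1, 0 < lm' x - lp' x)
    (hGinvMem : ∀ m ∈ Set.Icc (lm (-1) - lp (-1)) (lm 1 - lp 1), Γinv m ∈ Set.Icc (-1:ℝ) 1)
    (hGinvRight : ∀ m ∈ Set.Icc (lm (-1) - lp (-1)) (lm 1 - lp 1), lm (Γinv m) - lp (Γinv m) = m)
    (hGinvLeft : ∀ g ∈ Set.Icc (-1:ℝ) 1, Γinv (lm g - lp g) = g)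
    (hZ : (ZSet p n F b).Nonempty)
    (σs : Fin p → ℝ) (hσs : ∀ i, 0 ≤ σs i)
    (hmin : ∀ σ : Fin p → ℝ, (∀ i, 0 ≤ σ i) →
      slack lp lm Γinv p n F b σs ≤ slack lp lm Γinv p n F b σ) :
    sSup {w : ℝ | ∃ z ∈ ZSet p n F b, w = lossV lp lm n z (gpred lp lm Γinv p n F σs)} =
      (1 / 2) * slack lp lm Γinv p n F b σs ∧
    (1 / 2) * slack lp lm Γinv p n F b σs =
      sInf {v : ℝ | ∃ g : Fin n → ℝ, (∀ j, g j ∈ Set.Icc (-1:ℝ) 1) ∧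
        v = sSup {w : ℝ | ∃ z ∈ ZSet p n F b, w = lossV lp lm n z g}} :=
  stmt_8_general p n F b lp lm Γinv hlpm hlmm hGinvMem hGinvRight hZ σs hσs hmin
end

section
/- Suboptimal weightings give valid loss guarantees (Observation 2.3): for any σ₀ ∈ ℝᵖ with σ₀ ≥ 0 componentwise, the worst-case loss of playing g(σ₀) is bounded by half the slack: sup over z ∈ Z of ℓ(z, g(σ₀)) ≤ (1/2)·γ(σ₀). -/
open scoped BigOperators

theorem stmt_9 (p n : ℕ) (hp : 0 < p) (hn : 0 < n)
    (F : Fin p → Fin n → ℝ) (hF : ∀ i j, F i j ∈ Set.Icc (-1:ℝ) 1) (b : Fin p → ℝ)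
    (lp lm lp' lm' lp'' lm'' Γinv : ℝ → ℝ)
    (hlpc : ContinuousOn lp (Set.Icc (-1) 1))
    (hlmc : ContinuousOn lm (Set.Icc (-1) 1))
    (hlpd : ∀ x ∈ Set.Ioo (-1:ℝ) 1, HasDerivAt lp (lp' x) x)
    (hlmd : ∀ x ∈ Set.Ioo (-1:ℝ) 1, HasDerivAt lm (lm' x) x)
    (hlpd2 : ∀ x ∈ Set.Ioo (-1:ℝ) 1, HasDerivAt lp' (lp'' x) x)
    (hlmd2 : ∀ x ∈ Set.Ioo (-1:ℝ) 1, HasDerivAt lm' (lm'' x) x)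
    (hlpm : AntitoneOn lp (Set.Icc (-1) 1))
    (hlmm : MonotoneOn lm (Set.Icc (-1) 1))
    (hslope : ∀ x ∈ Set.Ioo (-1:ℝ) 1, 0 < lm' x - lp' x)
    (hGinvMem : ∀ m ∈ Set.Icc (lm (-1) - lp (-1)) (lm 1 - lp 1), Γinv m ∈ Set.Icc (-1:ℝ) 1)
    (hGinvRight : ∀ m ∈ Set.Icc (lm (-1) - lp (-1)) (lm 1 - lp 1), lm (Γinv m) - lp (Γinv m) = m)
    (hGinvLeft : ∀ g ∈ Set.Icc (-1:ℝ) 1, Γinv (lm g - lp g) = g)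
    (hZ : (ZSet p n F b).Nonempty)
    (σ₀ : Fin p → ℝ) (hσ₀ : ∀ i, 0 ≤ σ₀ i) :
    ∀ z ∈ ZSet p n F b,
      lossV lp lm n z (gpred lp lm Γinv p n F σ₀) ≤ (1 / 2) * slack lp lm Γinv p n F b σ₀ := by
  intro z hz
  obtain ⟨hz1, hz2⟩ := hz
  set m : Fin n → ℝ := fun j => ∑ i, σ₀ i * F i j with hm
  -- pointwise key inequality
  have key : ∀ j, (1 + z j) / 2 * lp (gpred lp lm Γinv p n F σ₀ j)
      + (1 - z j) / 2 * lm (gpred lp lm Γinv p n F σ₀ j)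
      ≤ (1/2) * Psi lp lm Γinv (m j) - (z j / 2) * m j := by
    intro j
    have hzj := hz1 j
    obtain ⟨hzl, hzu⟩ := hzj
    unfold gpred Psi
    by_cases h1 : (∑ i, σ₀ i * F i j) ≤ lm (-1) - lp (-1)
    · simp only [hm, h1, if_pos]
      nlinarith [h1, hzl]
    · by_cases h2 : (∑ i, σ₀ i * F i j) < lm 1 - lp 1
      · simp only [hm, h1, h2, if_neg, if_pos, not_false_iff]
        have hmem : (∑ i, σ₀ i * F i j) ∈ Set.Icc (lm (-1) - lp (-1)) (lm 1 - lp 1) :=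
          ⟨le_of_not_ge h1, le_of_lt h2⟩
        have hR := hGinvRight _ hmem
        apply le_of_eq
        linear_combination (-(z j / 2)) * hR
      · simp only [hm, h1, h2, if_neg, not_false_iff]
        push_neg at h2
        nlinarith [h2, hzu]
  -- sum swap
  have hswap : ∑ j, z j * m j = ∑ i, σ₀ i * (∑ j, F i j * z j) := by
    simp only [hm, Finset.mul_sum]
    rw [Finset.sum_comm]
    exact Finset.sum_congr rfl fun i _ => Finset.sum_congr rfl fun j _ => by ring
  have hnpos : (0:ℝ) < n := Nat.cast_pos.mpr hn
  -- constraint bound: ∑ b i * σ₀ i ≤ (1/n) * ∑ j, z j * m j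
  have hcon : ∑ i, b i * σ₀ i ≤ (1 / (n:ℝ)) * ∑ j, z j * m j := by
    rw [hswap, Finset.mul_sum]
    apply Finset.sum_le_sum
    intro i _
    have := hz2 i
    have hσ := hσ₀ i
    calc b i * σ₀ i ≤ ((1 / (n:ℝ)) * ∑ j, F i j * z j) * σ₀ i :=
          mul_le_mul_of_nonneg_right this hσ
      _ = 1 / (n:ℝ) * (σ₀ i * (∑ j, F i j * z j)) := by ring
  have hsum : ∑ j, ((1 + z j) / 2 * lp (gpred lp lm Γinv p n F σ₀ j)
      + (1 - z j) / 2 * lm (gpred lp lm Γinv p n F σ₀ j))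
      ≤ (1/2) * (∑ j, Psi lp lm Γinv (m j)) - (1/2) * ∑ j, z j * m j := by
    have := Finset.sum_le_sum (fun j (_ : j ∈ Finset.univ) => key j)
    calc _ ≤ ∑ j, ((1/2) * Psi lp lm Γinv (m j) - (z j / 2) * m j) := this
      _ = (1/2) * (∑ j, Psi lp lm Γinv (m j)) - (1/2) * ∑ j, z j * m j := by
          rw [Finset.sum_sub_distrib, Finset.mul_sum, Finset.mul_sum]
          congr 1
          exact Finset.sum_congr rfl fun j _ => by ring
  unfold lossV slack
  have h1n : (0:ℝ) ≤ 1 / (n:ℝ) := by positivity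
  have := mul_le_mul_of_nonneg_left hsum h1n
  calc (1 / (n : ℝ)) * ∑ j, ((1 + z j) / 2 * lp (gpred lp lm Γinv p n F σ₀ j)
        + (1 - z j) / 2 * lm (gpred lp lm Γinv p n F σ₀ j))
      ≤ (1 / (n:ℝ)) * ((1/2) * (∑ j, Psi lp lm Γinv (m j)) - (1/2) * ∑ j, z j * m j) := this
    _ = (1/2) * ((1 / (n:ℝ)) * ∑ j, Psi lp lm Γinv (m j)) - (1/2) * ((1/(n:ℝ)) * ∑ j, z j * m j) := by ring
    _ ≤ (1/2) * ((1 / (n:ℝ)) * ∑ j, Psi lp lm Γinv (m j)) - (1/2) * ∑ i, b i * σ₀ i := by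
        have := hcon
        linarith
    _ = 1 / 2 * (-(∑ i, b i * σ₀ i) + (1 / (n:ℝ)) * ∑ j, Psi lp lm Γinv (∑ i, σ₀ i * F i j)) := by
        simp only [hm]; ring
end
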